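/- arXiv:2201.00496 — 3 statements merged into one kernel-verified Lean document; each statement's English description precedes it below -/
import Mathlib

section
/- Let D be a semi-single-peaked domain on a tree T, i.e., D ⊆ D_SSP(T, x̄) for some x̄ ∈ A and the adjacency graph G_∼ is connected. Then D is not contained in D_SP(T) if and only if there exists a critical spot (x, y) in T. -/
open Classical

set_option linter.unusedSectionVars false
set_option linter.unusedVariables false

/-- A strict preference over `A`, represented as a ranking bijection:
`P k` is the `(k+1)`-th ranked alternative. -/
abbrev Pref (A : Type*) [Fintype A] := Fin (Fintype.card A) ≃ A

variable {A : Type*} [Fintype A] [DecidableEq A] [Nonempty A]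

/-- `rk P k` : the `(k+1)`-th ranked alternative of `P` (0-indexed, so `rk P 0 = r₁(P)`). -/
noncomputable def rk (P : Pref A) (k : ℕ) : A :=
  if h : k < Fintype.card A then P ⟨k, h⟩ else Classical.arbitrary A

/-- The peak `r₁(P)`. -/
noncomputable def peak (P : Pref A) : A := rk P 0

/-- The second-ranked alternative `r₂(P)`. -/
noncomputable def second (P : Pref A) : A := rk P 1

/-- `a` is strictly preferred to `b` under `P`. -/
def prefers (P : Pref A) (a b : A) : Prop := P.symm a < P.symm b

/-- Two preferences are completely reversed. -/
def Reversed (P P' : Pref A) : Prop := ∀ a b : A, prefers P a b ↔ prefers P' b a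

/-- A profile lies in the domain `D`. -/
def InDom (D : Set (Pref A)) {n : ℕ} (P : Fin n → Pref A) : Prop := ∀ i, P i ∈ D

/-- Unanimity (an SCF satisfying it is called a rule). -/
def IsRule (D : Set (Pref A)) {n : ℕ} (f : (Fin n → Pref A) → A) : Prop :=
  ∀ P : Fin n → Pref A, InDom D P → ∀ a : A, (∀ i, peak (P i) = a) → f P = a

/-- Strategy-proofness (relative to the domain `D`). -/
def StrategyProof (D : Set (Pref A)) {n : ℕ} (f : (Fin n → Pref A) → A) : Prop :=
  ∀ P : Fin n → Pref A, InDom D P → ∀ i : Fin n, ∀ Q ∈ D,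
    f P = f (Function.update P i Q) ∨ prefers (P i) (f P) (f (Function.update P i Q))

/-- The tops-only property. -/
def TopsOnly (D : Set (Pref A)) {n : ℕ} (f : (Fin n → Pref A) → A) : Prop :=
  ∀ P P' : Fin n → Pref A, InDom D P → InDom D P' →
    (∀ i, peak (P i) = peak (P' i)) → f P = f P'

/-- Anonymity. -/
def Anonymous (D : Set (Pref A)) {n : ℕ} (f : (Fin n → Pref A) → A) : Prop :=
  ∀ P : Fin n → Pref A, InDom D P → ∀ σ : Equiv.Perm (Fin n), f (P ∘ σ) = f P

/-- `f` behaves like a dictatorship on `B`. -/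
def DictatorOn (D : Set (Pref A)) {n : ℕ} (f : (Fin n → Pref A) → A) (B : Set A) : Prop :=
  ∃ i : Fin n, ∀ P : Fin n → Pref A, InDom D P → (∀ j, peak (P j) ∈ B) → f P = peak (P i)

/-- `f` is a dictatorship. -/
def Dictatorship (D : Set (Pref A)) {n : ℕ} (f : (Fin n → Pref A) → A) : Prop :=
  DictatorOn D f Set.univ

/-- A dictatorial domain. -/
def DictatorialDomain (D : Set (Pref A)) : Prop :=
  ∀ n : ℕ, 2 ≤ n → ∀ f : (Fin n → Pref A) → A,
    IsRule D f → StrategyProof D f → Dictatorship D f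

/-- A tops-only domain. -/
def TopsOnlyDomain (D : Set (Pref A)) : Prop :=
  ∀ n : ℕ, 2 ≤ n → ∀ f : (Fin n → Pref A) → A,
    IsRule D f → StrategyProof D f → TopsOnly D f

/-- Adjacency of two alternatives relative to the domain `D`. -/
def DomAdjacent (D : Set (Pref A)) (a b : A) : Prop :=
  ∃ P ∈ D, ∃ P' ∈ D, peak P = a ∧ second P = b ∧ peak P' = b ∧ second P' = a ∧
    ∀ k : ℕ, 2 ≤ k → rk P k = rk P' k

/-- The adjacency graph `G_∼` of the domain `D`. -/
noncomputable def adjGraph (D : Set (Pref A)) : SimpleGraph A :=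
  SimpleGraph.fromRel (DomAdjacent D)

/-- Path-connectedness of the domain. -/
def PathConnectedDom (D : Set (Pref A)) : Prop := (adjGraph D).Connected

/-- Diversity: the domain contains two completely reversed preferences. -/
def Diversity (D : Set (Pref A)) : Prop := ∃ P ∈ D, ∃ P' ∈ D, Reversed P P'

/-- `S(D^a)`: the set of alternatives second-ranked in some preference of `D` with peak `a`. -/
def secondsSet (D : Set (Pref A)) (a : A) : Set A := {b | ∃ P ∈ D, peak P = a ∧ second P = b}

/-- Leaf symmetry. -/
def LeafSymmetry (D : Set (Pref A)) : Prop :=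
  ∀ x : A, (∃! y, (adjGraph D).Adj x y) →
    (∃ u ∈ secondsSet D x, ∃ v ∈ secondsSet D x, u ≠ v) →
    ∃ z ∈ secondsSet D x, ¬ (adjGraph D).Adj x z ∧ x ∈ secondsSet D z

/-- Unidimensionality: path-connectedness, diversity and leaf symmetry. -/
def Unidimensional (D : Set (Pref A)) : Prop :=
  PathConnectedDom D ∧ Diversity D ∧ LeafSymmetry D

/-- The unique seconds property. -/
def UniqueSeconds (D : Set (Pref A)) : Prop := ∃ x b : A, secondsSet D x = {b}

/-- Minimal richness. -/
def MinimallyRich (D : Set (Pref A)) : Prop := ∀ a : A, ∃ P ∈ D, peak P = a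

/-- The vertex set `⟨x, y|T⟩` of the (in a tree, unique) shortest path between `x` and `y`. -/
def intv (T : SimpleGraph A) (x y : A) : Set A :=
  {z | T.dist x z + T.dist z y = T.dist x y}

/-- `a'` is the projection of `a` onto `B` in `T`. -/
def IsProjPt (T : SimpleGraph A) (B : Set A) (a a' : A) : Prop :=
  a' ∈ B ∧ ∀ b ∈ B, a' ∈ intv T a b

/-- The projection `Proj(a, B)` of `a` onto a path-closed set `B` in the tree `T`. -/
noncomputable def projOn (T : SimpleGraph A) (B : Set A) (a : A) : A :=
  if h : ∃ a', IsProjPt T B a a' then h.choose else a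

/-- `Γ(P)`: the vertex set of the minimal subtree of `T` spanning all the peaks. -/
def gammaSet (T : SimpleGraph A) {n : ℕ} (P : Fin n → Pref A) : Set A :=
  {c | ∃ i j : Fin n, c ∈ intv T (peak (P i)) (peak (P j))}

/-- The projection rule on `T` w.r.t. `xbar`. -/
noncomputable def projRule (T : SimpleGraph A) (xbar : A) {n : ℕ}
    (P : Fin n → Pref A) : A :=
  projOn T (gammaSet T P) xbar

/-- Single-peakedness on a tree. -/
def SinglePeaked (T : SimpleGraph A) (P : Pref A) : Prop :=
  ∀ c d : A, c ≠ d → c ∈ intv T (peak P) d → prefers P c d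

/-- Semi-single-peakedness on `T` w.r.t. the threshold `xbar`. -/
def SemiSP (T : SimpleGraph A) (xbar : A) (P : Pref A) : Prop :=
  (∀ c d : A, c ∈ intv T (peak P) xbar → d ∈ intv T (peak P) xbar → c ≠ d →
    c ∈ intv T (peak P) d → prefers P c d) ∧
  (∀ c : A, c ∉ intv T (peak P) xbar →
    prefers P (projOn T (intv T (peak P) xbar) c) c)

/-- A semi-single-peaked domain. -/
def SemiSPDomain (D : Set (Pref A)) : Prop :=
  ∃ (T : SimpleGraph A) (xbar : A), T.IsTree ∧
    D ⊆ {P | SemiSP T xbar P} ∧ (adjGraph D).Connected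

/-- `A^{a⇀b}`: the alternatives whose path to `b` goes through `a`. -/
def sideSet (T : SimpleGraph A) (a b : A) : Set A := {z | a ∈ intv T z b}

/-- `x = max^P(B)`: `x` is `P`'s best alternative of `B`. -/
def IsBestOf (P : Pref A) (x : A) (B : Set A) : Prop :=
  x ∈ B ∧ ∀ y ∈ B, y ≠ x → prefers P x y

/-- `a` and `b` are dual-thresholds in the tree `T`. -/
def DualThresholds (T : SimpleGraph A) (a b : A) : Prop :=
  a ≠ b ∧ ∀ c : A, c ∉ intv T a b →
    projOn T (intv T a b) c = a ∨ projOn T (intv T a b) c = b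

/-- An `(a,b)`-semi-hybrid preference on `T`. -/
def SemiHybridPref (T : SimpleGraph A) (a b : A) (P : Pref A) : Prop :=
  (peak P ∈ sideSet T a b \ {a} → SemiSP T a P ∧ IsBestOf P b (sideSet T b a)) ∧
  (peak P ∈ sideSet T b a \ {b} → SemiSP T b P ∧ IsBestOf P a (sideSet T a b)) ∧
  (peak P ∈ intv T a b → IsBestOf P a (sideSet T a b) ∧ IsBestOf P b (sideSet T b a))

/-- `x` is a leaf of the subgraph of `G` induced on `B`. -/
def IsLeafOn (G : SimpleGraph A) (B : Set A) (x : A) : Prop :=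
  x ∈ B ∧ ∃! y, y ∈ B ∧ G.Adj x y

/-- `D` is an `(a,b)`-semi-hybrid domain on the tree `T`. -/
def SemiHybridDomainOn (D : Set (Pref A)) (T : SimpleGraph A) (a b : A) : Prop :=
  T.IsTree ∧ DualThresholds T a b ∧ D ⊆ {P | SemiHybridPref T a b P} ∧
  (adjGraph D).Connected ∧
  (¬ ∃ (T' : SimpleGraph A) (a' b' : A), T'.IsTree ∧ DualThresholds T' a' b' ∧
      D ⊆ {P | SemiHybridPref T' a' b' P} ∧ intv T' a' b' ⊂ intv T a b) ∧
  ((adjGraph D).IsTree →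
    ∀ x : A, IsLeafOn (adjGraph D) (intv T a b) x →
      ∃ P ∈ D, ¬ SemiSP (adjGraph D) x P)

/-- `D` is a semi-hybrid domain. -/
def SemiHybridDomain (D : Set (Pref A)) : Prop :=
  ∃ (T : SimpleGraph A) (a b : A), SemiHybridDomainOn D T a b

/-- An `(a,b)`-hybrid preference on `T`. -/
def HybridPref (T : SimpleGraph A) (a b : A) (P : Pref A) : Prop :=
  (∀ y z : A, ((y ∈ sideSet T a b ∧ z ∈ sideSet T a b) ∨
      (y ∈ sideSet T b a ∧ z ∈ sideSet T b a)) → y ≠ z →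
    y ∈ intv T (peak P) z → prefers P y z) ∧
  (peak P ∈ sideSet T a b \ {a} → IsBestOf P a (intv T a b)) ∧
  (peak P ∈ sideSet T b a \ {b} → IsBestOf P b (intv T a b))

/-- `D` is an `(a,b)`-hybrid domain on the tree `T`. -/
def HybridDomainOn (D : Set (Pref A)) (T : SimpleGraph A) (a b : A) : Prop :=
  T.IsTree ∧ DualThresholds T a b ∧ D ⊆ {P | HybridPref T a b P} ∧
  (adjGraph D).Connected ∧
  (¬ ∃ (T' : SimpleGraph A) (a' b' : A), T'.IsTree ∧ DualThresholds T' a' b' ∧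
      D ⊆ {P | HybridPref T' a' b' P} ∧ intv T' a' b' ⊂ intv T a b) ∧
  3 ≤ (intv T a b).ncard

/-- `f` is an `(a,b)`-hybrid rule on the tree `T`. -/
def IsHybridRule (D : Set (Pref A)) {n : ℕ} (f : (Fin n → Pref A) → A)
    (T : SimpleGraph A) (a b : A) : Prop :=
  T.IsTree ∧ DualThresholds T a b ∧ 3 ≤ (intv T a b).ncard ∧
  ∃ i : Fin n, ∀ P : Fin n → Pref A, InDom D P →
    (peak (P i) ∈ intv T a b → f P = peak (P i)) ∧
    (peak (P i) ∈ sideSet T a b \ {a} → f P = projOn T (gammaSet T P) a) ∧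
    (peak (P i) ∈ sideSet T b a \ {b} → f P = projOn T (gammaSet T P) b)

/-- The PNT rule on `T` w.r.t. the edge `(x, y)`, with the two distinguished voters `i, j`. -/
noncomputable def pntRule (T : SimpleGraph A) (x y : A) {n : ℕ} (i j : Fin n)
    (P : Fin n → Pref A) : A :=
  if peak (P i) ∈ sideSet T y x then peak (P i)
  else if peak (P j) ∈ sideSet T x y then projOn T (gammaSet T P) x
  else if prefers (P j) x y then x else y

/-- `(x, y)` is a critical spot in `T` for the domain `D`. -/
def CriticalSpot (D : Set (Pref A)) (T : SimpleGraph A) (x y : A) : Prop :=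
  T.Adj x y ∧
  (∀ P ∈ D, peak P ∈ sideSet T x y → SemiSP T y P) ∧
  (∀ P ∈ D, peak P ∈ sideSet T y x → IsBestOf P x (sideSet T x y)) ∧
  (∃ P ∈ D, ∃ P' ∈ D, peak P = peak P' ∧ peak P ∈ sideSet T y x ∧
    prefers P y x ∧ prefers P' x y)

/-- `x` is a path in the graph `G` (pairwise distinct, consecutive vertices adjacent). -/
def IsPathIn (G : SimpleGraph A) {v : ℕ} (x : Fin v → A) : Prop :=
  Function.Injective x ∧
  ∀ (k : ℕ) (h : k + 1 < v), G.Adj (x ⟨k, Nat.lt_of_succ_lt h⟩) (x ⟨k + 1, h⟩)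

/-- `x` is a cycle in the graph `G`. -/
def IsCycleIn (G : SimpleGraph A) {v : ℕ} (x : Fin v → A) : Prop :=
  Function.Injective x ∧
  (∀ (k : ℕ) (h : k + 1 < v), G.Adj (x ⟨k, Nat.lt_of_succ_lt h⟩) (x ⟨k + 1, h⟩)) ∧
  ∀ (h : 0 < v), G.Adj (x ⟨v - 1, Nat.sub_lt h Nat.one_pos⟩) (x ⟨0, h⟩)

/-- The line `L^A` induced by the ranking of the preference `P`. -/
noncomputable def lineOf (P : Pref A) : SimpleGraph A :=
  SimpleGraph.fromRel (fun a b =>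
    ∃ k : ℕ, k + 1 < Fintype.card A ∧ rk P k = a ∧ rk P (k + 1) = b)

/-- The median of three natural numbers. -/
def med3 (a b c : ℕ) : ℕ := max (min a b) (min (max a b) c)

/-- The two-voter profile in which voter `i` reports `Pi` and the other voter reports `Q`. -/
noncomputable def prof2 (i : Fin 2) (Pi Q : Pref A) : Fin 2 → Pref A :=
  Function.update (fun _ => Q) i Pi

-- ===== AUX START =====
namespace SSPAux

open SimpleGraph

variable {T : SimpleGraph A}

lemma mem_intv {x y z : A} : z ∈ intv T x y ↔ T.dist x z + T.dist z y = T.dist x y :=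
  Iff.rfl

lemma intv_left (x y : A) : x ∈ intv T x y := by
  simp [intv, SimpleGraph.dist_self]

lemma intv_right (x y : A) : y ∈ intv T x y := by
  simp [intv, SimpleGraph.dist_self]

lemma intv_symm {x y z : A} (h : z ∈ intv T x y) : z ∈ intv T y x := by
  simp only [intv, Set.mem_setOf_eq] at h ⊢
  have c1 : T.dist y z = T.dist z y := SimpleGraph.dist_comm
  have c2 : T.dist z x = T.dist x z := SimpleGraph.dist_comm
  have c3 : T.dist y x = T.dist x y := SimpleGraph.dist_comm
  omega

lemma trans1 (hc : T.Connected) {x y z w : A} (hz : z ∈ intv T x y) (hw : w ∈ intv T x z) :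
    w ∈ intv T x y ∧ z ∈ intv T w y := by
  simp only [intv, Set.mem_setOf_eq] at hz hw ⊢
  have t1 := hc.dist_triangle (u := x) (v := w) (w := y)
  have t2 := hc.dist_triangle (u := w) (v := z) (w := y)
  constructor <;> omega

lemma trans2 (hc : T.Connected) {x y z w : A} (hz : z ∈ intv T x y) (hw : w ∈ intv T z y) :
    w ∈ intv T x y ∧ z ∈ intv T x w := by
  simp only [intv, Set.mem_setOf_eq] at hz hw ⊢
  have t1 := hc.dist_triangle (u := x) (v := w) (w := y)
  have t3 := hc.dist_triangle (u := x) (v := z) (w := w)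
  constructor <;> omega

lemma dist_getVert_le (hc : T.Connected) {x y : A} (W : T.Walk x y) (i : ℕ) :
    T.dist x (W.getVert i) ≤ i := by
  induction i with
  | zero => simp [SimpleGraph.dist_self]
  | succ n ih =>
    by_cases h : n < W.length
    · have hadj := W.adj_getVert_succ h
      have h1 : T.dist (W.getVert n) (W.getVert (n + 1)) = 1 :=
        SimpleGraph.dist_eq_one_iff_adj.mpr hadj
      have t := hc.dist_triangle (u := x) (v := W.getVert n) (w := W.getVert (n + 1))
      omega
    · have he : W.getVert (n + 1) = W.getVert n := by
        rw [W.getVert_of_length_le (by omega), W.getVert_of_length_le (by omega)]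
      rw [he]; omega

lemma shortest_getVert (hc : T.Connected) {x y : A} (W : T.Walk x y)
    (hW : W.length = T.dist x y) {i : ℕ} (hi : i ≤ W.length) :
    T.dist x (W.getVert i) = i ∧ T.dist (W.getVert i) y = W.length - i ∧
      W.getVert i ∈ intv T x y := by
  have h1 := dist_getVert_le hc W i
  have h2 : T.dist (W.getVert i) y ≤ W.length - i := by
    have hrev : W.reverse.getVert (W.length - i) = W.getVert i := by
      rw [Walk.getVert_reverse]
      congr 1
      omega
    have h3 := dist_getVert_le hc W.reverse (W.length - i)
    rw [hrev] at h3
    rw [SimpleGraph.dist_comm]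
    exact h3
  have t := hc.dist_triangle (u := x) (v := W.getVert i) (w := y)
  refine ⟨by omega, by omega, ?_⟩
  simp only [intv, Set.mem_setOf_eq]
  omega

lemma exists_step (hc : T.Connected) {x y : A} (hne : x ≠ y) :
    ∃ v, T.Adj x v ∧ T.dist v y + 1 = T.dist x y ∧ v ∈ intv T x y := by
  obtain ⟨W, hW⟩ := hc.exists_walk_length_eq_dist x y
  have hlen : 0 < W.length := by
    rcases Nat.eq_zero_or_pos W.length with h0 | h
    · exact absurd (W.eq_of_length_eq_zero h0) hne
    · exact h
  obtain ⟨ha, hb, hm⟩ := shortest_getVert hc W hW (i := 1) (by omega)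
  refine ⟨W.getVert 1, ?_, by omega, hm⟩
  have h0 := W.adj_getVert_succ (i := 0) hlen
  simpa using h0

lemma exists_path_dist (hc : T.Connected) (u v : A) :
    ∃ W : T.Walk u v, W.IsPath ∧ W.length = T.dist u v := by
  obtain ⟨W, hW⟩ := hc.exists_walk_length_eq_dist u v
  refine ⟨W.bypass, W.bypass_isPath, le_antisymm ?_ ?_⟩
  · exact hW ▸ W.length_bypass_le
  · exact SimpleGraph.dist_le _

lemma notMem_support_of_dist {u v x : A} (W : T.Walk u v) (hW : W.length ≤ T.dist u v)
    (hx : W.length < T.dist x v) : x ∉ W.support := by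
  intro hmem
  obtain ⟨q, r, hqr⟩ := Walk.mem_support_iff_exists_append.mp hmem
  have hlen : q.length + r.length = W.length := by
    rw [hqr, Walk.length_append]
  have hr := SimpleGraph.dist_le r
  omega

lemma unique_step (hT : T.IsTree) {x a b y : A} (h1 : T.Adj x a) (h2 : T.Adj x b)
    (hy : T.dist a y + 1 = T.dist x y) (hy' : T.dist b y + 1 = T.dist x y) : a = b := by
  have hc := hT.isConnected
  obtain ⟨Qa, hQa, hQalen⟩ := exists_path_dist hc a y
  obtain ⟨Qb, hQb, hQblen⟩ := exists_path_dist hc b y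
  have hxa : x ∉ Qa.support :=
    notMem_support_of_dist Qa (le_of_eq hQalen) (by omega)
  have hxb : x ∉ Qb.support :=
    notMem_support_of_dist Qb (le_of_eq hQblen) (by omega)
  have hPa : (Walk.cons h1 Qa).IsPath := hQa.cons hxa
  have hPb : (Walk.cons h2 Qb).IsPath := hQb.cons hxb
  have heq := (hT.existsUnique_path x y).unique hPa hPb
  have hgv := congrArg (fun W : T.Walk x y => W.getVert 1) heq
  simpa using hgv

lemma key_unique (hT : T.IsTree) : ∀ (n : ℕ) {p q z w : A}, T.dist p z = n →
    z ∈ intv T p q → w ∈ intv T p q → T.dist p w = n → z = w := by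
  have hc := hT.isConnected
  intro n
  induction n with
  | zero =>
    intro p q z w h1 _ _ h2
    exact ((hc.dist_eq_zero_iff).mp h1).symm.trans ((hc.dist_eq_zero_iff).mp h2)
  | succ n ih =>
    intro p q z w h1 hz hw h2
    have hpz : p ≠ z := by
      intro h; rw [h, SimpleGraph.dist_self] at h1; omega
    have hpw : p ≠ w := by
      intro h; rw [h, SimpleGraph.dist_self] at h2; omega
    obtain ⟨a, haadj, hadist, hamem⟩ := exists_step hc hpz
    obtain ⟨b, hbadj, hbdist, hbmem⟩ := exists_step hc hpw
    have hza := trans1 hc hz hamem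
    have hwb := trans1 hc hw hbmem
    have h1a : T.dist p a = 1 := SimpleGraph.dist_eq_one_iff_adj.mpr haadj
    have h1b : T.dist p b = 1 := SimpleGraph.dist_eq_one_iff_adj.mpr hbadj
    have haq : T.dist a q + 1 = T.dist p q := by
      have h3 := hza.1; simp only [intv, Set.mem_setOf_eq] at h3 hz
      omega
    have hbq : T.dist b q + 1 = T.dist p q := by
      have h3 := hwb.1; simp only [intv, Set.mem_setOf_eq] at h3 hw
      omega
    have hab : a = b := unique_step hT (y := q) haadj hbadj (by omega) (by omega)
    subst hab
    exact ih (show T.dist a z = n by omega) hza.2 hwb.2 (show T.dist a w = n by omega)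

lemma ord (hT : T.IsTree) {p q z w : A} (hz : z ∈ intv T p q) (hw : w ∈ intv T p q)
    (hle : T.dist p z ≤ T.dist p w) : z ∈ intv T p w := by
  have hc := hT.isConnected
  obtain ⟨W, hW⟩ := hc.exists_walk_length_eq_dist p w
  have hi : T.dist p z ≤ W.length := by omega
  obtain ⟨hd, _, hm⟩ := shortest_getVert hc W hW hi
  have hmq : W.getVert (T.dist p z) ∈ intv T p q := (trans1 hc hw hm).1
  have heq : W.getVert (T.dist p z) = z := key_unique hT (T.dist p z) hd hmq hz rfl
  rw [heq] at hm
  exact hm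

lemma adj_dist_ne (hT : T.IsTree) {x y : A} (h : T.Adj x y) (z : A) :
    T.dist z x ≠ T.dist z y := by
  have hc := hT.isConnected
  intro heq
  obtain ⟨Q, hQ, hQlen⟩ := exists_path_dist hc z x
  have hy : y ∉ Q.support := by
    intro hmem
    obtain ⟨q, r, hqr⟩ := Walk.mem_support_iff_exists_append.mp hmem
    have hlen : q.length + r.length = Q.length := by rw [hqr, Walk.length_append]
    have hq1 := SimpleGraph.dist_le q
    have hq2 := SimpleGraph.dist_le r
    have h3 : T.dist y x = 1 := SimpleGraph.dist_eq_one_iff_adj.mpr h.symm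
    omega
  have hP2 : (Walk.cons h.symm Q.reverse).IsPath := by
    refine hQ.reverse.cons ?_
    rw [Walk.support_reverse]
    simpa using hy
  obtain ⟨R, hR, hRlen⟩ := exists_path_dist hc y z
  have heq2 := (hT.existsUnique_path y z).unique hP2 hR
  have hlen := congrArg Walk.length heq2
  simp only [Walk.length_cons, Walk.length_reverse] at hlen
  rw [hQlen, hRlen] at hlen
  have c1 : T.dist y z = T.dist z y := SimpleGraph.dist_comm
  omega

lemma adj_side_total (hT : T.IsTree) {x y : A} (h : T.Adj x y) (z : A) :
    x ∈ intv T z y ∨ y ∈ intv T z x := by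
  have hc := hT.isConnected
  have hne := adj_dist_ne hT h z
  have hxy : T.dist x y = 1 := SimpleGraph.dist_eq_one_iff_adj.mpr h
  have hyx : T.dist y x = 1 := SimpleGraph.dist_eq_one_iff_adj.mpr h.symm
  have t1 := hc.dist_triangle (u := z) (v := x) (w := y)
  have t2 := hc.dist_triangle (u := z) (v := y) (w := x)
  simp only [intv, Set.mem_setOf_eq]
  omega

lemma adj_side_not_both (hT : T.IsTree) {x y : A} (h : T.Adj x y) {z : A}
    (h1 : x ∈ intv T z y) (h2 : y ∈ intv T z x) : False := by
  have hxy : T.dist x y = 1 := SimpleGraph.dist_eq_one_iff_adj.mpr h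
  have hyx : T.dist y x = 1 := SimpleGraph.dist_eq_one_iff_adj.mpr h.symm
  simp only [intv, Set.mem_setOf_eq] at h1 h2
  omega

lemma median (hT : T.IsTree) : ∀ (n : ℕ) (a u v : A), T.dist a u = n →
    ∃ m, m ∈ intv T a u ∧ m ∈ intv T a v ∧ m ∈ intv T u v := by
  have hc := hT.isConnected
  intro n
  induction n using Nat.strong_induction_on with
  | _ n ih =>
    intro a u v hn
    by_cases ha : a ∈ intv T u v
    · exact ⟨a, intv_left a u, intv_left a v, ha⟩
    have hau : a ≠ u := fun h => ha (by rw [h]; exact intv_left u v)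
    obtain ⟨a', hadj, hdist, hmem⟩ := exists_step hc hau
    obtain ⟨m, h1, h2, h3⟩ := ih (T.dist a' u) (by omega) a' u v rfl
    have haa' : T.dist a a' = 1 := SimpleGraph.dist_eq_one_iff_adj.mpr hadj
    have hmau : m ∈ intv T a u ∧ a' ∈ intv T a m := trans2 hc hmem h1
    refine ⟨m, hmau.1, ?_, h3⟩
    -- show m ∈ intv T a v
    have hpar : T.dist m a ≠ T.dist m a' := adj_dist_ne hT hadj m
    have hparv : T.dist v a ≠ T.dist v a' := adj_dist_ne hT hadj v
    have cma : T.dist m a = T.dist a m := SimpleGraph.dist_comm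
    have cma' : T.dist m a' = T.dist a' m := SimpleGraph.dist_comm
    have cva : T.dist v a = T.dist a v := SimpleGraph.dist_comm
    have cva' : T.dist v a' = T.dist a' v := SimpleGraph.dist_comm
    have ca'a : T.dist a' a = T.dist a a' := SimpleGraph.dist_comm
    have t1 := hc.dist_triangle (u := a) (v := a') (w := m)
    have t2 := hc.dist_triangle (u := a') (v := a) (w := m)
    have t3 := hc.dist_triangle (u := a) (v := m) (w := v)
    have t4 := hc.dist_triangle (u := a') (v := a) (w := v)
    have t5 := hc.dist_triangle (u := a) (v := a') (w := v)
    have h2' : T.dist a' m + T.dist m v = T.dist a' v := h2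
    rcases Nat.lt_or_ge (T.dist a m) (T.dist a' m) with hcase | hcase
    · -- dist a' m = dist a m + 1
      simp only [intv, Set.mem_setOf_eq]
      omega
    · have hBm : T.dist a m = T.dist a' m + 1 := by omega
      rcases Nat.lt_or_ge (T.dist a' v) (T.dist a v) with hcasev | hcasev
      · -- dist a v = dist a' v + 1
        simp only [intv, Set.mem_setOf_eq]
        omega
      · have hBv : T.dist a' v = T.dist a v + 1 := by omega
        exfalso
        have haav : a ∈ intv T a' v := by
          simp only [intv, Set.mem_setOf_eq]; omega
        by_cases hm0 : T.dist a' m = 0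
        · have hma' : a' = m := (hc.dist_eq_zero_iff).mp hm0
          rw [hma'] at haav
          exact ha (trans2 hc h3 haav).1
        · have hord : a ∈ intv T a' m := ord hT haav h2 (by omega)
          simp only [intv, Set.mem_setOf_eq] at hord
          omega

lemma gate (hT : T.IsTree) (u v a : A) : ∃ q, IsProjPt T (intv T u v) a q := by
  have hc := hT.isConnected
  obtain ⟨m, hmu, hmv, hmuv⟩ := median hT (T.dist a u) a u v rfl
  refine ⟨m, hmuv, ?_⟩
  intro w hw
  simp only [intv, Set.mem_setOf_eq]
  rcases le_or_gt (T.dist u w) (T.dist u m) with hcase | hcase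
  · have hwum : w ∈ intv T u m := ord hT hw hmuv hcase
    have h1 : T.dist a m + T.dist m u = T.dist a u := hmu
    have h2 : T.dist u w + T.dist w m = T.dist u m := hwum
    have cwm : T.dist w m = T.dist m w := SimpleGraph.dist_comm
    have cwu : T.dist w u = T.dist u w := SimpleGraph.dist_comm
    have cmu : T.dist m u = T.dist u m := SimpleGraph.dist_comm
    have t1 := hc.dist_triangle (u := a) (v := m) (w := w)
    have t2 := hc.dist_triangle (u := a) (v := w) (w := u)
    omega
  · have hmuw : m ∈ intv T u w := ord hT hmuv hw (by omega)
    have hwmv : w ∈ intv T m v := (trans1 hc hw hmuw).2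
    have h1 : T.dist a m + T.dist m v = T.dist a v := hmv
    have h2 : T.dist m w + T.dist w v = T.dist m v := hwmv
    have t1 := hc.dist_triangle (u := a) (v := m) (w := w)
    have t2 := hc.dist_triangle (u := a) (v := w) (w := v)
    omega

lemma projOn_spec (hT : T.IsTree) (u v a : A) :
    IsProjPt T (intv T u v) a (projOn T (intv T u v) a) := by
  have h := gate hT u v a
  rw [projOn, dif_pos h]
  exact h.choose_spec

lemma crossing (hT : T.IsTree) {x y : A} (hadj : T.Adj x y) {z w : A}
    (hz : x ∈ intv T z y) (hw : y ∈ intv T w x) :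
    x ∈ intv T z w ∧ y ∈ intv T z w := by
  have hc := hT.isConnected
  have hxy : T.dist x y = 1 := SimpleGraph.dist_eq_one_iff_adj.mpr hadj
  obtain ⟨m, hmz, hmw, hmzw⟩ := median hT (T.dist x z) x z w rfl
  have hyxw : y ∈ intv T x w := intv_symm hw
  by_cases hm0 : T.dist x m = 0
  · have hxm : x = m := (hc.dist_eq_zero_iff).mp hm0
    subst hxm
    refine ⟨hmzw, (trans2 hc hmzw hyxw).1⟩
  · exfalso
    have hyxm : y ∈ intv T x m := ord hT hyxw hmw (by omega)
    have hyxz : y ∈ intv T x z := (trans1 hc hmz hyxm).1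
    simp only [intv, Set.mem_setOf_eq] at hyxz hz
    have c1 : T.dist y z = T.dist z y := SimpleGraph.dist_comm
    have c2 : T.dist z x = T.dist x z := SimpleGraph.dist_comm
    omega

lemma side_self (x y : A) : x ∈ sideSet T x y := intv_left x y

lemma mem_side_iff {x y z : A} : z ∈ sideSet T x y ↔ x ∈ intv T z y := Iff.rfl

lemma sides_disjoint (hT : T.IsTree) {x y : A} (hadj : T.Adj x y) {z : A}
    (h1 : z ∈ sideSet T x y) (h2 : z ∈ sideSet T y x) : False :=
  adj_side_not_both hT hadj h1 h2

lemma side_total (hT : T.IsTree) {x y : A} (hadj : T.Adj x y) (z : A) :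
    z ∈ sideSet T x y ∨ z ∈ sideSet T y x :=
  adj_side_total hT hadj z

lemma crossing_dist (hT : T.IsTree) {x y : A} (hadj : T.Adj x y) {z w : A}
    (hz : z ∈ sideSet T x y) (hw : w ∈ sideSet T y x) :
    T.dist z w = T.dist z x + 1 + T.dist y w ∧ x ∈ intv T z w ∧ y ∈ intv T z w := by
  obtain ⟨h1, h2⟩ := crossing hT hadj hz hw
  have hxy : T.dist x y = 1 := SimpleGraph.dist_eq_one_iff_adj.mpr hadj
  refine ⟨?_, h1, h2⟩
  simp only [intv, Set.mem_setOf_eq] at h1 h2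
  have hz' : T.dist z x + T.dist x y = T.dist z y := hz
  omega

lemma intv_side (hT : T.IsTree) {x y : A} (hadj : T.Adj x y) {z w : A}
    (hz : z ∈ sideSet T x y) (hw : w ∈ sideSet T x y) : intv T z w ⊆ sideSet T x y := by
  have hc := hT.isConnected
  intro m hm
  by_contra hms
  have hmyx : m ∈ sideSet T y x := (side_total hT hadj m).resolve_left hms
  obtain ⟨d1, -, -⟩ := crossing_dist hT hadj hz hmyx
  obtain ⟨d2, -, -⟩ := crossing_dist hT hadj.symm hmyx hw
  have hm' : T.dist z m + T.dist m w = T.dist z w := hm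
  have t := hc.dist_triangle (u := z) (v := x) (w := w)
  have c1 : T.dist y m = T.dist m y := SimpleGraph.dist_comm
  omega

-- Stage 2: preference lemmas
lemma rk_lt {P : Pref A} {k : ℕ} (h : k < Fintype.card A) : rk P k = P ⟨k, h⟩ := dif_pos h

lemma symm_rk {P : Pref A} {k : ℕ} (h : k < Fintype.card A) : (P.symm (rk P k) : ℕ) = k := by
  rw [rk_lt h]; simp

lemma rk_symm_eq {P : Pref A} (a : A) : rk P ((P.symm a : ℕ)) = a := by
  rw [rk_lt (Fin.is_lt _)]
  simp

lemma prefers_def {P : Pref A} {a b : A} :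
    prefers P a b ↔ (P.symm a : ℕ) < (P.symm b : ℕ) := by
  unfold prefers
  exact Fin.lt_def

lemma eq_of_symm_eq {P : Pref A} {a b : A} (h : (P.symm a : ℕ) = (P.symm b : ℕ)) : a = b :=
  P.symm.injective (Fin.ext h)

lemma peak_def (P : Pref A) : (P.symm (peak P) : ℕ) = 0 := symm_rk Fintype.card_pos

lemma second_def (h2 : 2 ≤ Fintype.card A) (P : Pref A) : (P.symm (second P) : ℕ) = 1 :=
  symm_rk (by omega)

lemma pref_total {P : Pref A} {a b : A} (h : a ≠ b) : prefers P a b ∨ prefers P b a := by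
  rw [prefers_def, prefers_def]
  rcases lt_trichotomy ((P.symm a : ℕ)) ((P.symm b : ℕ)) with h1 | h1 | h1
  · exact Or.inl h1
  · exact absurd (eq_of_symm_eq h1) h
  · exact Or.inr h1

lemma pref_asymm {P : Pref A} {a b : A} (h1 : prefers P a b) (h2 : prefers P b a) : False := by
  rw [prefers_def] at h1 h2; omega

lemma pref_irrefl {P : Pref A} {a : A} (h : prefers P a a) : False := by
  rw [prefers_def] at h; omega

lemma pref_trans {P : Pref A} {a b c : A} (h1 : prefers P a b) (h2 : prefers P b c) :
    prefers P a c := by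
  rw [prefers_def] at h1 h2 ⊢; omega

lemma pref_peak (P : Pref A) {a : A} (h : a ≠ peak P) : prefers P (peak P) a := by
  rw [prefers_def, peak_def]
  have hne : (P.symm a : ℕ) ≠ 0 := fun h0 => h (eq_of_symm_eq (by rw [peak_def]; omega))
  omega

lemma pref_to_peak_false {P : Pref A} {a : A} (h : prefers P a (peak P)) : False := by
  rw [prefers_def, peak_def] at h; omega

lemma index_ge2 {P : Pref A} (h2 : 2 ≤ Fintype.card A) {a : A} (ha : a ≠ peak P)
    (ha2 : a ≠ second P) : 2 ≤ (P.symm a : ℕ) := by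
  have h0 : (P.symm a : ℕ) ≠ 0 := fun h => ha (eq_of_symm_eq (by rw [peak_def]; omega))
  have h1 : (P.symm a : ℕ) ≠ 1 := fun h => ha2 (eq_of_symm_eq (by rw [second_def h2]; omega))
  omega

lemma pref_second {P : Pref A} (h2 : 2 ≤ Fintype.card A) {a : A} (ha : a ≠ peak P)
    (ha2 : a ≠ second P) : prefers P (second P) a := by
  have := index_ge2 h2 ha ha2
  rw [prefers_def, second_def h2]
  omega

lemma symm_eq_of_rk {P : Pref A} {a : A} {k : ℕ} (hk : k < Fintype.card A)
    (h : rk P k = a) : (P.symm a : ℕ) = k := by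
  rw [← h, symm_rk hk]

lemma pref_transfer {P P' : Pref A} (htail : ∀ k, 2 ≤ k → rk P k = rk P' k)
    {a b : A} (ha : 2 ≤ (P.symm a : ℕ)) (hb : 2 ≤ (P.symm b : ℕ)) (h : prefers P a b) :
    prefers P' a b := by
  have ha' : (P'.symm a : ℕ) = (P.symm a : ℕ) :=
    symm_eq_of_rk (Fin.is_lt _) (by rw [← htail _ ha, rk_symm_eq])
  have hb' : (P'.symm b : ℕ) = (P.symm b : ℕ) :=
    symm_eq_of_rk (Fin.is_lt _) (by rw [← htail _ hb, rk_symm_eq])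
  rw [prefers_def] at h ⊢
  omega

lemma mem_intv_self (hc : T.Connected) {x z : A} (h : z ∈ intv T x x) : z = x := by
  simp only [intv, Set.mem_setOf_eq, SimpleGraph.dist_self] at h
  have c1 : T.dist z x = T.dist x z := SimpleGraph.dist_comm
  exact ((hc.dist_eq_zero_iff).mp (by omega)).symm

-- Stage 3: SSP domain lemmas

lemma adj_of_second_toward (hT : T.IsTree) {xbar : A} {P : Pref A} (hP : SemiSP T xbar P)
    (hcard : 3 ≤ Fintype.card A)
    (hbx : second P ∈ intv T (peak P) xbar) : T.Adj (peak P) (second P) := by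
  have hc := hT.isConnected
  have hab : peak P ≠ second P := by
    intro h
    have h0 : (P.symm (peak P) : ℕ) = 0 := peak_def P
    have h1 : (P.symm (second P) : ℕ) = 1 := second_def (by omega) P
    rw [h] at h0; omega
  have hax : peak P ≠ xbar := by
    intro he
    exact hab (mem_intv_self hc (he ▸ hbx)).symm
  obtain ⟨e, headj, hedist, hemem⟩ := exists_step hc hax
  have h1e : T.dist (peak P) e = 1 := SimpleGraph.dist_eq_one_iff_adj.mpr headj
  have hdab : 0 < T.dist (peak P) (second P) := hc.pos_dist_of_ne hab
  have heb : e ∈ intv T (peak P) (second P) := ord hT hemem hbx (by omega)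
  by_cases heqb : e = second P
  · exact heqb ▸ headj
  · exfalso
    have hpref : prefers P e (second P) := hP.1 e (second P) hemem hbx heqb heb
    have hsymb : (P.symm (second P) : ℕ) = 1 := second_def (by omega) P
    have hlt : (P.symm e : ℕ) = 0 := by rw [prefers_def] at hpref; omega
    have hea : e = peak P := eq_of_symm_eq (by rw [peak_def]; omega)
    exact headj.ne hea.symm

lemma domAdj_tree {D : Set (Pref A)} {xbar : A} (hT : T.IsTree)
    (hssp : D ⊆ {P | SemiSP T xbar P}) (hcard : 3 ≤ Fintype.card A)
    {a b : A} (h : DomAdjacent D a b) : T.Adj a b := by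
  obtain ⟨P, hPD, P', hP'D, hpk, hsec, hpk', hsec', htail⟩ := h
  subst hpk; subst hsec
  have hP : SemiSP T xbar P := hssp hPD
  have hP' : SemiSP T xbar P' := hssp hP'D
  by_cases hbx : second P ∈ intv T (peak P) xbar
  · exact adj_of_second_toward hT hP hcard hbx
  · have hproj := projOn_spec hT (peak P) xbar (second P)
    have hpref := hP.2 (second P) hbx
    set g := projOn T (intv T (peak P) xbar) (second P) with hgdef
    have hsymb : (P.symm (second P) : ℕ) = 1 := second_def (by omega) P
    have hg0 : (P.symm g : ℕ) = 0 := by rw [prefers_def] at hpref; omega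
    have hga : g = peak P := eq_of_symm_eq (by rw [peak_def]; omega)
    have hax' : peak P ∈ intv T (second P) xbar := by
      have h2 := hproj.2 xbar (intv_right _ _)
      rw [hga] at h2; exact h2
    have hadj := adj_of_second_toward hT hP' hcard (by rw [hpk', hsec']; exact hax')
    rw [hpk', hsec'] at hadj
    exact hadj.symm

lemma adj_prefs {D : Set (Pref A)} {u v : A} (hadj : (adjGraph D).Adj u v) :
    ∃ R ∈ D, ∃ R' ∈ D, peak R = u ∧ second R = v ∧ peak R' = v ∧ second R' = u ∧
      ∀ k, 2 ≤ k → rk R k = rk R' k := by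
  unfold adjGraph at hadj
  rw [SimpleGraph.fromRel_adj] at hadj
  rcases hadj.2 with h | h
  · exact h
  · obtain ⟨P, hP, P', hP', h1, h2, h3, h4, h5⟩ := h
    exact ⟨P', hP', P, hP, h3, h4, h1, h2, fun k hk => (h5 k hk).symm⟩

lemma tree_to_adj {D : Set (Pref A)} {xbar : A} (hT : T.IsTree)
    (hssp : D ⊆ {P | SemiSP T xbar P}) (hcard : 3 ≤ Fintype.card A)
    (hconn : (adjGraph D).Connected) {u v : A} (h : T.Adj u v) : (adjGraph D).Adj u v := by
  have hle : adjGraph D ≤ T := by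
    intro x y hxy
    unfold adjGraph at hxy
    rw [SimpleGraph.fromRel_adj] at hxy
    rcases hxy.2 with h' | h'
    · exact domAdj_tree hT hssp hcard h'
    · exact (domAdj_tree hT hssp hcard h').symm
  obtain ⟨W, hWp, hWlen⟩ := exists_path_dist (T := adjGraph D) hconn u v
  have hWT : (W.mapLe hle).IsPath := (SimpleGraph.Walk.mapLe_isPath hle).mpr hWp
  have hP1 : (SimpleGraph.Walk.cons h (SimpleGraph.Walk.nil)).IsPath := by
    rw [SimpleGraph.Walk.cons_isPath_iff]
    refine ⟨SimpleGraph.Walk.IsPath.nil, ?_⟩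
    simp [h.ne]
  have heq := (hT.existsUnique_path u v).unique hWT hP1
  have hlen := congrArg SimpleGraph.Walk.length heq
  simp only [SimpleGraph.Walk.mapLe, SimpleGraph.Walk.length_map,
    SimpleGraph.Walk.length_cons, SimpleGraph.Walk.length_nil] at hlen
  exact W.adj_of_length_eq_one hlen

lemma ssp_restrict (hT : T.IsTree) {xbar : A} {P : Pref A} (hP : SemiSP T xbar P)
    {y : A} (hy : y ∈ intv T (peak P) xbar) : SemiSP T y P := by
  have hc := hT.isConnected
  constructor
  · intro c d hcm hdm hcd hcin
    exact hP.1 c d (trans1 hc hy hcm).1 (trans1 hc hy hdm).1 hcd hcin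
  · intro c hc'
    have hproj := projOn_spec hT (peak P) y c
    set q := projOn T (intv T (peak P) y) c with hq
    by_cases hcx : c ∈ intv T (peak P) xbar
    · have hyc : y ∈ intv T (peak P) c := by
        rcases le_or_gt (T.dist (peak P) c) (T.dist (peak P) y) with hle | hlt
        · exact absurd (ord hT hcx hy hle) hc'
        · exact ord hT hy hcx (by omega)
      have h1 : T.dist (peak P) q + T.dist q y = T.dist (peak P) y := hproj.1
      have h2 : T.dist c q + T.dist q y = T.dist c y := hproj.2 y (intv_right _ _)
      have h3 : T.dist c q + T.dist q (peak P) = T.dist c (peak P) := hproj.2 (peak P) (intv_left _ _)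
      have h4 : T.dist (peak P) y + T.dist y c = T.dist (peak P) c := hyc
      have c1 : T.dist q (peak P) = T.dist (peak P) q := SimpleGraph.dist_comm
      have c2 : T.dist c (peak P) = T.dist (peak P) c := SimpleGraph.dist_comm
      have c3 : T.dist c y = T.dist y c := SimpleGraph.dist_comm
      have hqy : q = y := (hc.dist_eq_zero_iff).mp (show T.dist q y = 0 by omega)
      have hyne : y ≠ c := fun h => hc' (by rw [← h]; exact intv_right (peak P) y)
      rw [hqy]
      exact hP.1 y c hy hcx hyne hyc
    · have hgproj := projOn_spec hT (peak P) xbar c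
      set g := projOn T (intv T (peak P) xbar) c with hgdef
      have hgpref : prefers P g c := hP.2 c hcx
      by_cases hgy : g ∈ intv T (peak P) y
      · have h2 : T.dist c q + T.dist q g = T.dist c g := hproj.2 g hgy
        have h3 : T.dist c g + T.dist g q = T.dist c q := hgproj.2 q (trans1 hc hy hproj.1).1
        have c1 : T.dist q g = T.dist g q := SimpleGraph.dist_comm
        have hqg : q = g := (hc.dist_eq_zero_iff).mp (show T.dist q g = 0 by omega)
        rw [hqg]
        exact hgpref
      · have hyg : y ∈ intv T (peak P) g := by
          rcases le_or_gt (T.dist (peak P) g) (T.dist (peak P) y) with hle | hlt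
          · exact absurd (ord hT hgproj.1 hy hle) hgy
          · exact ord hT hy hgproj.1 (by omega)
        have h1 : T.dist (peak P) q + T.dist q y = T.dist (peak P) y := hproj.1
        have h2 : T.dist c q + T.dist q y = T.dist c y := hproj.2 y (intv_right _ _)
        have h3 : T.dist c q + T.dist q (peak P) = T.dist c (peak P) := hproj.2 (peak P) (intv_left _ _)
        have h4 : T.dist c g + T.dist g (peak P) = T.dist c (peak P) := hgproj.2 (peak P) (intv_left _ _)
        have h5 : T.dist c g + T.dist g y = T.dist c y := hgproj.2 y hy
        have h6 : T.dist (peak P) y + T.dist y g = T.dist (peak P) g := hyg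
        have c1 : T.dist q (peak P) = T.dist (peak P) q := SimpleGraph.dist_comm
        have c2 : T.dist g (peak P) = T.dist (peak P) g := SimpleGraph.dist_comm
        have c3 : T.dist y g = T.dist g y := SimpleGraph.dist_comm
        have hqy : q = y := (hc.dist_eq_zero_iff).mp (show T.dist q y = 0 by omega)
        have hyneg : y ≠ g := fun h => hgy (by rw [← h]; exact intv_right (peak P) y)
        have hpyg : prefers P y g := hP.1 y g hy hgproj.1 hyneg hyg
        rw [hqy]
        exact pref_trans hpyg hgpref

lemma viol_off (hT : T.IsTree) {xbar : A} {P : Pref A} (hP : SemiSP T xbar P) {x y : A}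
    (hmem : y ∈ intv T (peak P) x) (hpref : prefers P x y) :
    y ∉ intv T (peak P) xbar := by
  have hc := hT.isConnected
  intro hyx
  by_cases hxx : x ∈ intv T (peak P) xbar
  · have hxy : x ≠ y := fun h => pref_irrefl (h ▸ hpref)
    exact pref_asymm (hP.1 y x hyx hxx (Ne.symm hxy) hmem) hpref
  · have hgproj := projOn_spec hT (peak P) xbar x
    set g := projOn T (intv T (peak P) xbar) x with hgdef
    have hgpref : prefers P g x := hP.2 x hxx
    have hgmem : g ∈ intv T (peak P) x := intv_symm (hgproj.2 (peak P) (intv_left _ _))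
    rcases le_or_gt (T.dist (peak P) y) (T.dist (peak P) g) with hle | hlt
    · have hyg : y ∈ intv T (peak P) g := ord hT hmem hgmem hle
      by_cases hyeg : y = g
      · exact pref_asymm (hyeg ▸ hgpref) hpref
      · exact pref_asymm (pref_trans (hP.1 y g hyx hgproj.1 hyeg hyg) hgpref) hpref
    · have hgy : g ∈ intv T (peak P) y := ord hT hgmem hmem (by omega)
      have hgxy : g ∈ intv T x y := hgproj.2 y hyx
      have e1 : T.dist (peak P) y + T.dist y x = T.dist (peak P) x := hmem
      have e2 : T.dist (peak P) g + T.dist g y = T.dist (peak P) y := hgy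
      have e3 : T.dist x g + T.dist g y = T.dist x y := hgxy
      have e4 : T.dist (peak P) g + T.dist g x = T.dist (peak P) x := hgmem
      have c1 : T.dist x g = T.dist g x := SimpleGraph.dist_comm
      have c2 : T.dist x y = T.dist y x := SimpleGraph.dist_comm
      omega

lemma viol_xbar_side (hT : T.IsTree) {xbar : A} {P : Pref A} (hP : SemiSP T xbar P) {x y : A}
    (hmem : y ∈ intv T (peak P) x) (hpref : prefers P x y) : y ∈ intv T xbar x := by
  have hc := hT.isConnected
  have hoff := viol_off hT hP hmem hpref
  have hgproj := projOn_spec hT (peak P) xbar x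
  set g := projOn T (intv T (peak P) xbar) x with hgdef
  have hgmem : g ∈ intv T (peak P) x := intv_symm (hgproj.2 (peak P) (intv_left _ _))
  have hgy : g ∈ intv T (peak P) y := by
    rcases le_or_gt (T.dist (peak P) y) (T.dist (peak P) g) with hle | hlt
    · exact absurd (trans1 hc hgproj.1 (ord hT hmem hgmem hle)).1 hoff
    · exact ord hT hgmem hmem (by omega)
  have h1 : T.dist x g + T.dist g xbar = T.dist x xbar := hgproj.2 xbar (intv_right _ _)
  have e1 : T.dist (peak P) y + T.dist y x = T.dist (peak P) x := hmem
  have e2 : T.dist (peak P) g + T.dist g y = T.dist (peak P) y := hgy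
  have e4 : T.dist (peak P) g + T.dist g x = T.dist (peak P) x := hgmem
  have t1 := hc.dist_triangle (u := xbar) (v := g) (w := y)
  have t2 := hc.dist_triangle (u := xbar) (v := y) (w := x)
  have c1 : T.dist x g = T.dist g x := SimpleGraph.dist_comm
  have c2 : T.dist x xbar = T.dist xbar x := SimpleGraph.dist_comm
  have c3 : T.dist g xbar = T.dist xbar g := SimpleGraph.dist_comm
  have c4 : T.dist g y = T.dist y g := SimpleGraph.dist_comm
  have c5 : T.dist y x = T.dist x y := SimpleGraph.dist_comm
  show T.dist xbar y + T.dist y x = T.dist xbar x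
  omega

lemma decomp (hT : T.IsTree) {P : Pref A} {α β : A} (hne : α ≠ β)
    (hmem : α ∈ intv T (peak P) β) (hpref : prefers P β α) :
    ∃ γ δ : A, T.Adj γ δ ∧ γ ∈ intv T α β ∧ δ ∈ intv T α β ∧
      γ ∈ intv T (peak P) δ ∧ prefers P δ γ := by
  have hc := hT.isConnected
  obtain ⟨W, hW⟩ := hc.exists_walk_length_eq_dist α β
  by_cases hall : ∀ i < W.length, prefers P (W.getVert i) (W.getVert (i + 1))
  · exfalso
    have hchain : ∀ i, i ≤ W.length → 0 < i → prefers P α (W.getVert i) := by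
      intro i
      induction i with
      | zero => omega
      | succ n ihn =>
        intro hle _
        rcases Nat.eq_zero_or_pos n with h0 | h0
        · subst h0
          have := hall 0 (by omega)
          rwa [W.getVert_zero] at this
        · exact pref_trans (ihn (by omega) h0) (hall n (by omega))
    have hlen0 : 0 < W.length := by
      rcases Nat.eq_zero_or_pos W.length with h0 | h0
      · exact absurd (W.eq_of_length_eq_zero h0) hne
      · exact h0
    have hfin := hchain W.length le_rfl hlen0
    rw [W.getVert_length] at hfin
    exact pref_asymm hfin hpref
  · push_neg at hall
    obtain ⟨i, hi, hnp⟩ := hall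
    obtain ⟨hd1, hd2, hm1⟩ := shortest_getVert hc W hW (i := i) (by omega)
    obtain ⟨hd1', hd2', hm2⟩ := shortest_getVert hc W hW (i := i + 1) (by omega)
    have hadj := W.adj_getVert_succ hi
    have hnev : W.getVert i ≠ W.getVert (i + 1) := hadj.ne
    have hpref' : prefers P (W.getVert (i + 1)) (W.getVert i) :=
      (pref_total hnev).resolve_left hnp
    refine ⟨W.getVert i, W.getVert (i + 1), hadj, hm1, hm2, ?_, hpref'⟩
    have hA := trans2 hc hmem hm1
    have hB := trans2 hc hmem hm2
    have e1 : T.dist (peak P) α + T.dist α (W.getVert i) = T.dist (peak P) (W.getVert i) :=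
      hA.2
    have e2 : T.dist (peak P) α + T.dist α (W.getVert (i + 1)) =
        T.dist (peak P) (W.getVert (i + 1)) := hB.2
    have hd : T.dist (W.getVert i) (W.getVert (i + 1)) = 1 :=
      SimpleGraph.dist_eq_one_iff_adj.mpr hadj
    show T.dist (peak P) (W.getVert i) + T.dist (W.getVert i) (W.getVert (i + 1)) =
      T.dist (peak P) (W.getVert (i + 1))
    omega

lemma propagate {D : Set (Pref A)} {xbar : A} (hT : T.IsTree)
    (hssp : D ⊆ {P | SemiSP T xbar P}) (hcard : 3 ≤ Fintype.card A)
    (hconn : (adjGraph D).Connected) {x y : A} (hadj : T.Adj x y) :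
    ∀ (n : ℕ) (v : A), T.dist v y = n → v ∈ sideSet T y x →
      (∃ Q ∈ D, peak Q = v ∧ prefers Q x y) →
      ∃ b, b ∈ sideSet T y x ∧ (∃ Q ∈ D, peak Q = b ∧ prefers Q x y) ∧
        (∃ Q' ∈ D, peak Q' = b ∧ prefers Q' y x) := by
  have hc := hT.isConnected
  intro n
  induction n using Nat.strong_induction_on with
  | _ n ih =>
    rintro v hn hvside ⟨Q, hQD, hQpeak, hQpref⟩
    by_cases hdis : ∃ Q' ∈ D, peak Q' = v ∧ prefers Q' y x
    · exact ⟨v, hvside, ⟨Q, hQD, hQpeak, hQpref⟩, hdis⟩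
    push_neg at hdis
    have hvy : v ≠ y := by
      intro h
      apply pref_to_peak_false (P := Q) (a := x)
      rw [hQpeak, h]
      exact hQpref
    obtain ⟨v', hv'adj, hv'dist, hv'mem⟩ := exists_step hc hvy
    have hv'side : v' ∈ sideSet T y x := by
      have e1 : T.dist v v' + T.dist v' y = T.dist v y := hv'mem
      have e2 : T.dist v y + T.dist y x = T.dist v x := hvside
      have t1 := hc.dist_triangle (u := v') (v := y) (w := x)
      have t2 := hc.dist_triangle (u := v) (v := v') (w := x)
      show T.dist v' y + T.dist y x = T.dist v' x
      omega
    have hGedge := tree_to_adj hT hssp hcard hconn hv'adj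
    obtain ⟨R, hRD, R', hR'D, hRpk, hRsec, hR'pk, hR'sec, htail⟩ := adj_prefs hGedge
    have hxv : x ≠ v := by
      intro h
      subst h
      exact hadj.ne (mem_intv_self hc hvside).symm
    by_cases hv'y : v' = y
    · subst hv'y
      have h2 := pref_second (P := R) (show 2 ≤ Fintype.card A by omega) (a := x)
        (by rw [hRpk]; exact hxv) (by rw [hRsec]; exact hadj.ne)
      rw [hRsec] at h2
      exact ⟨v, hvside, ⟨Q, hQD, hQpeak, hQpref⟩, ⟨R, hRD, hRpk, h2⟩⟩
    · have hRpref : prefers R x y := by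
        rcases pref_total (P := R) hadj.ne with h | h
        · exact h
        · exact absurd h (hdis R hRD hRpk)
      have hyv : y ≠ v := Ne.symm hvy
      have hxv' : x ≠ v' := by
        intro h
        subst h
        exact sides_disjoint hT hadj (side_self x y) hv'side
      have hyv' : y ≠ v' := fun h => hv'y h.symm
      have hR'pref : prefers R' x y :=
        pref_transfer htail
          (index_ge2 (by omega) (by rw [hRpk]; exact hxv) (by rw [hRsec]; exact hxv'))
          (index_ge2 (by omega) (by rw [hRpk]; exact hyv) (by rw [hRsec]; exact hyv'))
          hRpref
      exact ih (T.dist v' y) (by omega) v' rfl hv'side ⟨R', hR'D, hR'pk, hR'pref⟩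

end SSPAux
-- ===== AUX END =====

/-- a semi-single-peaked domain on a tree `T` is not contained in
the single-peaked domain on `T` iff there is a critical spot in `T`. -/
theorem stmt9_ssp_critical_spot (D : Set (Pref A)) (hD : D.Nonempty)
    (hcard : 3 ≤ Fintype.card A)
    (T : SimpleGraph A) (hT : T.IsTree) (xbar : A)
    (hssp : D ⊆ {P | SemiSP T xbar P}) (hconn : (adjGraph D).Connected) :
    ¬ (D ⊆ {P | SinglePeaked T P}) ↔ ∃ x y : A, CriticalSpot D T x y := by
  classical
  have hc := hT.isConnected
  constructor
  · intro hnot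
    obtain ⟨P0, hP0D, hP0n⟩ := Set.not_subset.mp hnot
    have hP0n' : ¬ SinglePeaked T P0 := hP0n
    unfold SinglePeaked at hP0n'
    push_neg at hP0n'
    obtain ⟨c0, d0, hne0, hmem0, hnp0⟩ := hP0n'
    have hpref0 : prefers P0 d0 c0 := (SSPAux.pref_total hne0).resolve_left hnp0
    obtain ⟨γ0, δ0, hadj0, -, -, hγmem0, hpref0'⟩ := SSPAux.decomp hT hne0 hmem0 hpref0
    set Sv : Finset (A × A) := Finset.univ.filter
      (fun e => T.Adj e.1 e.2 ∧ ∃ P ∈ D, e.2 ∈ intv T (peak P) e.1 ∧ prefers P e.1 e.2)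
      with hSv
    have hS0 : (δ0, γ0) ∈ Sv := by
      rw [hSv]
      simp only [Finset.mem_filter, Finset.mem_univ, true_and]
      exact ⟨hadj0.symm, P0, hP0D, hγmem0, hpref0'⟩
    obtain ⟨⟨x, y⟩, heS, hemax⟩ :=
      Sv.exists_max_image (fun e => T.dist xbar e.2) ⟨_, hS0⟩
    rw [hSv] at heS
    simp only [Finset.mem_filter, Finset.mem_univ, true_and] at heS
    obtain ⟨hadjxy, W, hWD, hWmem, hWpref⟩ := heS
    have hxbar : y ∈ intv T xbar x := SSPAux.viol_xbar_side hT (hssp hWD) hWmem hWpref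
    have hxbarside : xbar ∈ sideSet T y x := hxbar
    refine ⟨x, y, hadjxy, ?_, ?_, ?_⟩
    · -- every preference with peak on the x-side is semi-single-peaked w.r.t. y
      intro P hPD hPside
      have hcross := SSPAux.crossing_dist hT hadjxy hPside hxbarside
      exact SSPAux.ssp_restrict hT (hssp hPD) hcross.2.2
    · -- x is the best alternative of the x-side for peaks on the y-side
      intro P hPD hPside
      refine ⟨SSPAux.side_self x y, ?_⟩
      intro z hz hneq
      by_contra hnp
      have hpz : prefers P z x := (SSPAux.pref_total hneq).resolve_right hnp
      have hcross := SSPAux.crossing_dist hT hadjxy.symm hPside hz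
      have hxmem : x ∈ intv T (peak P) z := hcross.2.2
      obtain ⟨γ, δ, hadjγδ, hγ, hδ, hγmem, hprefγδ⟩ :=
        SSPAux.decomp hT (Ne.symm hneq) hxmem hpz
      have hγside : γ ∈ sideSet T x y :=
        SSPAux.intv_side hT hadjxy (SSPAux.side_self x y) hz hγ
      have hmax := hemax (δ, γ) (by
        rw [hSv]
        simp only [Finset.mem_filter, Finset.mem_univ, true_and]
        exact ⟨hadjγδ.symm, P, hPD, hγmem, hprefγδ⟩)
      have hdist := (SSPAux.crossing_dist hT hadjxy.symm hxbarside hγside).1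
      simp only at hmax
      omega
    · -- the disagreement condition
      obtain ⟨b, hbside, ⟨Q, hQD, hQpk, hQpref⟩, ⟨Q', hQ'D, hQ'pk, hQ'pref⟩⟩ :=
        SSPAux.propagate hT hssp hcard hconn hadjxy (T.dist (peak W) y) (peak W) rfl
          hWmem ⟨W, hWD, rfl, hWpref⟩
      refine ⟨Q', hQ'D, Q, hQD, ?_, ?_, hQ'pref, hQpref⟩
      · rw [hQ'pk, hQpk]
      · rw [hQ'pk]; exact hbside
  · rintro ⟨x, y, hadjxy, h1, h2, P, hPD, P', hP'D, hpk, hside, hPyx, hP'xy⟩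
    intro hsub
    have hsp : SinglePeaked T P' := hsub hP'D
    have hside' : y ∈ intv T (peak P') x := by rw [← hpk]; exact hside
    exact SSPAux.pref_asymm (hsp y x (Ne.symm hadjxy.ne) hside') hP'xy
end

section
/- Let D be an (a,b)-semi-hybrid domain on a tree T. Then D is not contained in D_H(T, a, b) if and only if there exists a critical spot (x, y) in T such that either x, y ∈ A^{a⇀b}∖{a} or x, y ∈ A^{b⇀a}∖{b}. -/
open Classical

set_option linter.unusedSectionVars false
set_option linter.unusedVariables false

variable {A : Type*} [Fintype A] [DecidableEq A] [Nonempty A]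

/-! ### Auxiliary lemmas for Statement 10 -/

section Stmt10Aux

variable {A : Type*} [Fintype A] [DecidableEq A] [Nonempty A]

lemma pref_trans {P : Pref A} {x y z : A} (h1 : prefers P x y) (h2 : prefers P y z) :
    prefers P x z := lt_trans h1 h2

lemma pref_irrefl {P : Pref A} {x : A} (h : prefers P x x) : False := lt_irrefl _ h

lemma pref_asymm {P : Pref A} {x y : A} (h1 : prefers P x y) (h2 : prefers P y x) : False :=
  lt_irrefl _ (lt_trans h1 h2)

lemma pref_ne {P : Pref A} {x y : A} (h : prefers P x y) : x ≠ y := by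
  rintro rfl; exact pref_irrefl h

lemma pref_total {P : Pref A} {x y : A} (h : x ≠ y) : prefers P x y ∨ prefers P y x := by
  rcases lt_or_gt_of_ne (P.symm.injective.ne h) with h' | h'
  · exact Or.inl h'
  · exact Or.inr h'

lemma rk_eq {P : Pref A} {k : ℕ} (h : k < Fintype.card A) : rk P k = P ⟨k, h⟩ := dif_pos h

lemma symm_rk {P : Pref A} {k : ℕ} (h : k < Fintype.card A) :
    P.symm (rk P k) = ⟨k, h⟩ := by rw [rk_eq h, Equiv.symm_apply_apply]

lemma card_pos' : 0 < Fintype.card A := Fintype.card_pos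

lemma prefers_peak {P : Pref A} {x : A} (hx : x ≠ peak P) : prefers P (peak P) x := by
  have h0 : (0 : ℕ) < Fintype.card A := Fintype.card_pos
  have hpk : P.symm (peak P) = ⟨0, h0⟩ := symm_rk h0
  have hne : P.symm x ≠ ⟨0, h0⟩ := by
    intro h
    apply hx
    have := congrArg P h
    rw [Equiv.apply_symm_apply] at this
    rw [this, peak, rk_eq h0]
  unfold prefers
  rw [hpk, Fin.lt_def]
  exact Nat.pos_of_ne_zero (fun h => hne (Fin.ext h))

lemma prefers_second (hcard : 3 ≤ Fintype.card A) {P : Pref A} {x : A}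
    (hx1 : x ≠ peak P) (hx2 : x ≠ second P) : prefers P (second P) x := by
  have h1 : (1 : ℕ) < Fintype.card A := by omega
  have h0 : (0 : ℕ) < Fintype.card A := by omega
  have hs : P.symm (second P) = ⟨1, h1⟩ := symm_rk h1
  have hne1 : P.symm x ≠ ⟨1, h1⟩ := by
    intro h
    apply hx2
    have := congrArg P h
    rw [Equiv.apply_symm_apply] at this
    rw [this, second, rk_eq h1]
  have hne0 : P.symm x ≠ ⟨0, h0⟩ := by
    intro h
    apply hx1
    have := congrArg P h
    rw [Equiv.apply_symm_apply] at this
    rw [this, peak, rk_eq h0]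
  have hv0 : (P.symm x).val ≠ 0 := fun h => hne0 (by simp [Fin.ext_iff, h])
  have hv1 : (P.symm x).val ≠ 1 := fun h => hne1 (by simp [Fin.ext_iff, h])
  unfold prefers
  rw [hs, Fin.lt_def]
  show 1 < (P.symm x).val
  omega

lemma second_ne_peak (hcard : 3 ≤ Fintype.card A) {P : Pref A} : second P ≠ peak P := by
  have h1 : (1 : ℕ) < Fintype.card A := by omega
  have h0 : (0 : ℕ) < Fintype.card A := by omega
  rw [second, peak, rk_eq h1, rk_eq h0]
  intro h
  have := P.injective h
  simp [Fin.ext_iff] at this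

lemma tail_pref_iff (hcard : 3 ≤ Fintype.card A) {P P' : Pref A}
    (htail : ∀ k : ℕ, 2 ≤ k → rk P k = rk P' k) {u v : A}
    (hu1 : u ≠ peak P) (hu2 : u ≠ second P) (hv1 : v ≠ peak P) (hv2 : v ≠ second P) :
    (prefers P u v ↔ prefers P' u v) := by
  have key : ∀ w : A, w ≠ peak P → w ≠ second P → (P'.symm w).val = (P.symm w).val := by
    intro w hw1 hw2
    have h0 : (0 : ℕ) < Fintype.card A := by omega
    have h1 : (1 : ℕ) < Fintype.card A := by omega
    set i := P.symm w with hi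
    have hiv : P ⟨i.val, i.isLt⟩ = w := by rw [hi]; simp [Fin.eta]
    have hv0 : i.val ≠ 0 := by
      intro h
      apply hw1
      rw [peak, rk_eq h0, ← hiv]
      congr 1
      simp [Fin.ext_iff, h]
    have hv1' : i.val ≠ 1 := by
      intro h
      apply hw2
      rw [second, rk_eq h1, ← hiv]
      congr 1
      simp [Fin.ext_iff, h]
    have h2i : 2 ≤ i.val := by omega
    have := htail i.val h2i
    rw [rk_eq i.isLt, rk_eq i.isLt] at this
    have : P' ⟨i.val, i.isLt⟩ = w := by rw [← this, hiv]
    rw [← this, Equiv.symm_apply_apply]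
  unfold prefers
  rw [Fin.lt_def, Fin.lt_def, key u hu1 hu2, key v hv1 hv2]

end Stmt10Aux
section Stmt10Tree

open SimpleGraph

variable {A : Type*} [Fintype A] [DecidableEq A] [Nonempty A]
variable {T : SimpleGraph A}

lemma dcomm (T : SimpleGraph A) (x y : A) : T.dist x y = T.dist y x :=
  SimpleGraph.dist_comm

lemma mem_intv_iff {x y z : A} :
    z ∈ intv T x y ↔ T.dist x z + T.dist z y = T.dist x y := Iff.rfl

lemma intv_self_left (hc : T.Connected) (x y : A) : x ∈ intv T x y := by
  simp [mem_intv_iff, SimpleGraph.dist_self]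

lemma intv_self_right (hc : T.Connected) (x y : A) : y ∈ intv T x y := by
  simp [mem_intv_iff, SimpleGraph.dist_self]

lemma intv_comm {x y z : A} (h : z ∈ intv T x y) : z ∈ intv T y x := by
  rw [mem_intv_iff] at h ⊢
  have e1 := dcomm T y z
  have e2 := dcomm T z x
  have e3 := dcomm T y x
  omega

lemma dist_eq_zero' (hc : T.Connected) {x y : A} (h : T.dist x y = 0) : x = y :=
  hc.dist_eq_zero_iff.1 h

lemma intv_self (hc : T.Connected) {x z : A} (h : z ∈ intv T x x) : z = x := by
  rw [mem_intv_iff, SimpleGraph.dist_self] at h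
  exact (dist_eq_zero' hc (by omega)).symm

/-- B3 : if `y ∈ ⟨x,z⟩` and `c ∈ ⟨x,y⟩` then `c ∈ ⟨x,z⟩` and `y ∈ ⟨c,z⟩`. -/
lemma intv_trans (hc : T.Connected) {x y z c : A}
    (hy : y ∈ intv T x z) (hcy : c ∈ intv T x y) :
    c ∈ intv T x z ∧ y ∈ intv T c z := by
  rw [mem_intv_iff] at hy hcy ⊢
  have t1 := hc.dist_triangle (u := c) (v := y) (w := z)
  have t2 := hc.dist_triangle (u := x) (v := c) (w := z)
  constructor
  · omega
  · rw [mem_intv_iff]; omega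

/-- B5' : if `y ∈ ⟨x,z⟩` and `w ∈ ⟨y,z⟩` then `w ∈ ⟨x,z⟩` and `y ∈ ⟨x,w⟩`. -/
lemma intv_trans' (hc : T.Connected) {x y z w : A}
    (hy : y ∈ intv T x z) (hw : w ∈ intv T y z) :
    w ∈ intv T x z ∧ y ∈ intv T x w := by
  rw [mem_intv_iff] at hy hw ⊢
  have t1 := hc.dist_triangle (u := x) (v := y) (w := w)
  have t2 := hc.dist_triangle (u := x) (v := w) (w := z)
  constructor
  · omega
  · rw [mem_intv_iff]; omega

/-- B6 : if `u ∈ ⟨z,t⟩` and `v ∈ ⟨u,t⟩` then `u ∈ ⟨z,v⟩`. -/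
lemma intv_mid (hc : T.Connected) {z t u v : A}
    (h1 : u ∈ intv T z t) (h2 : v ∈ intv T u t) : u ∈ intv T z v := by
  rw [mem_intv_iff] at h1 h2 ⊢
  have t1 := hc.dist_triangle (u := z) (v := v) (w := t)
  have t2 := hc.dist_triangle (u := z) (v := u) (w := v)
  omega

lemma dist_adj (hadj : T.Adj u v) : T.dist u v = 1 :=
  SimpleGraph.dist_eq_one_iff_adj.2 hadj

/-- In a tree, every path realizes the distance. -/
lemma path_length_eq_dist (ht : T.IsTree) {z w : A} {p : T.Walk z w} (hp : p.IsPath) :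
    p.length = T.dist z w := by
  obtain ⟨q, hq, hql⟩ := ht.isConnected.exists_path_of_dist z w
  have := ht.existsUnique_path z w
  obtain ⟨r, -, hr⟩ := this
  rw [hr p hp, ← hr q hq]
  exact hql

/-- If a vertex lies on a walk of minimal length, the distances add up. -/
lemma dist_add_of_mem_support (hc : T.Connected) {z w : A} {p : T.Walk z w}
    (hlen : p.length = T.dist z w) {v : A} (hv : v ∈ p.support) : v ∈ intv T z w := by
  rw [mem_intv_iff]
  have hspec := p.take_spec hv
  have hlen2 : (p.takeUntil v hv).length + (p.dropUntil v hv).length = p.length := by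
    rw [← SimpleGraph.Walk.length_append, hspec]
  have h1 := SimpleGraph.dist_le (p.takeUntil v hv)
  have h2 := SimpleGraph.dist_le (p.dropUntil v hv)
  have h3 := hc.dist_triangle (u := z) (v := v) (w := w)
  omega

/-- Append two paths whose supports only share the junction. -/
lemma isPath_append {z u t : A} {p : T.Walk z u} {q : T.Walk u t}
    (hp : p.IsPath) (hq : q.IsPath)
    (hint : ∀ x, x ∈ p.support → x ∈ q.support → x = u) : (p.append q).IsPath := by
  rw [SimpleGraph.Walk.isPath_def, SimpleGraph.Walk.support_append]
  apply List.Nodup.append hp.support_nodup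
  · have := hq.support_nodup
    have hq' : q.support = u :: q.support.tail := q.support_eq_cons
    rw [hq'] at this
    exact this.of_cons
  · intro x hx hx'
    have hxq : x ∈ q.support := List.mem_of_mem_tail hx'
    have : x = u := hint x hx hxq
    subst this
    have := hq.support_nodup
    rw [q.support_eq_cons] at this
    exact (List.nodup_cons.1 this).1 hx'

/-- L3b : interval points lie on every path. -/
lemma mem_support_of_intv (ht : T.IsTree) {z w v : A} (hv : v ∈ intv T z w)
    {p : T.Walk z w} (hp : p.IsPath) : v ∈ p.support := by
  have hc := ht.isConnected
  obtain ⟨p1, hp1, hl1⟩ := hc.exists_path_of_dist z v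
  obtain ⟨p2, hp2, hl2⟩ := hc.exists_path_of_dist v w
  rw [mem_intv_iff] at hv
  have hint : ∀ x, x ∈ p1.support → x ∈ p2.support → x = v := by
    intro x hx1 hx2
    have d1 := dist_add_of_mem_support hc hl1 hx1
    have d2 := dist_add_of_mem_support hc hl2 hx2
    rw [mem_intv_iff] at d1 d2
    have t1 := hc.dist_triangle (u := z) (v := x) (w := w)
    have hxv : T.dist x v = 0 := by
      have hc1 := hc.dist_triangle (u := x) (v := v) (w := w)
      omega
    exact dist_eq_zero' hc hxv
  have happ : (p1.append p2).IsPath := isPath_append hp1 hp2 hint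
  have := ht.existsUnique_path z w
  obtain ⟨r, -, hr⟩ := this
  rw [hr p hp, ← hr _ happ]
  rw [SimpleGraph.Walk.mem_support_append_iff]
  exact Or.inl (SimpleGraph.Walk.end_mem_support p1)

/-- L-lin : linearity of intervals in a tree. -/
lemma intv_lin (ht : T.IsTree) {p t y c : A} (hy : y ∈ intv T p t) (hcm : c ∈ intv T p t) :
    y ∈ intv T p c ∨ c ∈ intv T p y := by
  have hc := ht.isConnected
  obtain ⟨P, hP, hPl⟩ := hc.exists_path_of_dist p t
  have hcs : c ∈ P.support := mem_support_of_intv ht hcm hP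
  have hys : y ∈ P.support := mem_support_of_intv ht hy hP
  rw [← P.take_spec hcs, SimpleGraph.Walk.mem_support_append_iff] at hys
  rcases hys with hys | hys
  · left
    have htk : (P.takeUntil c hcs).IsPath := hP.takeUntil hcs
    have : (P.takeUntil c hcs).length = T.dist p c := path_length_eq_dist ht htk
    exact dist_add_of_mem_support hc this hys
  · right
    have hdr : (P.dropUntil c hcs).IsPath := hP.dropUntil hcs
    have : (P.dropUntil c hcs).length = T.dist c t := path_length_eq_dist ht hdr
    have hyct := dist_add_of_mem_support hc this hys
    rw [mem_intv_iff] at hy hcm hyct ⊢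
    omega

/-- Dichotomy at an edge of a tree. -/
lemma edge_dichotomy (ht : T.IsTree) {u v : A} (hadj : T.Adj u v) (z : A) :
    u ∈ intv T z v ∨ v ∈ intv T z u := by
  have hc := ht.isConnected
  obtain ⟨P, hP, hPl⟩ := hc.exists_path_of_dist z u
  by_cases hv : v ∈ P.support
  · right; exact dist_add_of_mem_support hc hPl hv
  · left
    have hedge : (SimpleGraph.Walk.cons hadj SimpleGraph.Walk.nil : T.Walk u v).IsPath := by
      rw [SimpleGraph.Walk.cons_isPath_iff]
      refine ⟨SimpleGraph.Walk.IsPath.nil, ?_⟩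
      simp [hadj.ne]
    have hint : ∀ x, x ∈ P.support →
        x ∈ (SimpleGraph.Walk.cons hadj SimpleGraph.Walk.nil : T.Walk u v).support → x = u := by
      intro x hx hx'
      simp [SimpleGraph.Walk.support_cons, SimpleGraph.Walk.support_nil] at hx'
      rcases hx' with rfl | rfl
      · rfl
      · exact absurd hx hv
    have happ := isPath_append hP hedge hint
    have hlen := path_length_eq_dist ht happ
    rw [SimpleGraph.Walk.length_append] at hlen
    rw [mem_intv_iff, dist_adj hadj]
    simp [SimpleGraph.Walk.length_cons, SimpleGraph.Walk.length_nil] at hlen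
    omega

/-- L-chain. -/
lemma intv_chain (ht : T.IsTree) {pk s t z0 : A} (hst : s ≠ t)
    (h1 : s ∈ intv T pk t) (h2 : t ∈ intv T s z0) : t ∈ intv T pk z0 := by
  have hc := ht.isConnected
  obtain ⟨P1, hP1, hl1⟩ := hc.exists_path_of_dist pk t
  obtain ⟨P2, hP2, hl2⟩ := hc.exists_path_of_dist t z0
  have hint : ∀ x, x ∈ P1.support → x ∈ P2.support → x = t := by
    intro x hx1 hx2
    have d1 := dist_add_of_mem_support hc hl1 hx1
    have d2 := dist_add_of_mem_support hc hl2 hx2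
    -- d1 : x ∈ ⟨pk, t⟩, d2 : x ∈ ⟨t, z0⟩
    have h5 := intv_trans' hc h2 d2
    -- h5.2 : t ∈ ⟨s, x⟩
    have h52 := h5.2
    rw [mem_intv_iff] at h52
    rcases intv_lin ht (intv_comm d1) (intv_comm h1) with h6 | h6
    · -- x ∈ ⟨t, s⟩
      rw [mem_intv_iff] at h6
      have e1 := dcomm T s t
      have e2 := dcomm T s x
      have e3 := dcomm T t x
      have hxt : T.dist t x = 0 := by omega
      exact (dist_eq_zero' hc hxt).symm
    · -- s ∈ ⟨t, x⟩
      exfalso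
      rw [mem_intv_iff] at h6
      have e1 := dcomm T s t
      have e2 := dcomm T s x
      have e3 := dcomm T t x
      have hst0 : T.dist s t = 0 := by omega
      exact hst (dist_eq_zero' hc hst0)
  have happ := isPath_append hP1 hP2 hint
  have hlen := path_length_eq_dist ht happ
  rw [SimpleGraph.Walk.length_append, hl1, hl2] at hlen
  rw [mem_intv_iff]
  exact hlen

/-- L-gate : for an edge `(u,v)` with `v` on the way to `t`,
being beyond `u` relative to `v` or to `t` is the same. -/
lemma gate_iff (ht : T.IsTree) {u v t : A} (hadj : T.Adj u v) (hv : v ∈ intv T u t) (z : A) :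
    u ∈ intv T z v ↔ u ∈ intv T z t := by
  have hc := ht.isConnected
  constructor
  · intro h
    by_cases huv : u = v
    · exact absurd huv hadj.ne
    · have hvz : v ∈ intv T z t := intv_chain ht huv h hv
      exact (intv_trans hc hvz h).1
  · intro h
    exact intv_mid hc h hv

end Stmt10Tree
section Stmt10Proj

open SimpleGraph

variable {A : Type*} [Fintype A] [DecidableEq A] [Nonempty A]
variable {T : SimpleGraph A}

lemma isProjPt_unique (hc : T.Connected) {B : Set A} {c w w' : A}
    (h : IsProjPt T B c w) (h' : IsProjPt T B c w') : w = w' := by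
  have h1 : w' ∈ intv T c w := h'.2 w h.1
  have h2 : w ∈ intv T c w' := h.2 w' h'.1
  rw [mem_intv_iff] at h1 h2
  have e1 := dcomm T w w'
  have hz : T.dist w w' = 0 := by omega
  exact dist_eq_zero' hc hz

lemma projOn_eq (hc : T.Connected) {B : Set A} {c w : A} (hw : IsProjPt T B c w) :
    projOn T B c = w := by
  have hex : ∃ a', IsProjPt T B c a' := ⟨w, hw⟩
  rw [projOn, dif_pos hex]
  exact isProjPt_unique hc hex.choose_spec hw

/-- Extract a genuine projection point from the semi-single-peakedness hypothesis. -/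
lemma semiSP_proj (hc : T.Connected) {xbar : A} {P : Pref A} (hsp : SemiSP T xbar P)
    {c : A} (hcsp : c ∉ intv T (peak P) xbar) :
    ∃ w, IsProjPt T (intv T (peak P) xbar) c w ∧ prefers P w c := by
  have hpref := hsp.2 c hcsp
  by_cases hex : ∃ a', IsProjPt T (intv T (peak P) xbar) c a'
  · obtain ⟨w, hw⟩ := hex
    rw [projOn_eq hc hw] at hpref
    exact ⟨w, hw, hpref⟩
  · rw [projOn, dif_neg hex] at hpref
    exact absurd hpref pref_irrefl

/-- Restriction of semi-single-peakedness to a nearer threshold. -/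
lemma semiSP_restrict (ht : T.IsTree) {t y : A} {P : Pref A} (hsp : SemiSP T t P)
    (hy : y ∈ intv T (peak P) t) : SemiSP T y P := by
  have hc := ht.isConnected
  set pk := peak P with hpk
  have hsub : intv T pk y ⊆ intv T pk t := fun e he => (intv_trans hc hy he).1
  constructor
  · intro c d hcm hdm hne hcd
    exact hsp.1 c d (hsub hcm) (hsub hdm) hne hcd
  · intro c hcm
    -- find the explicit projection point and rewrite
    have hyB : y ∈ intv T pk y := intv_self_right hc pk y
    by_cases hcsp : c ∈ intv T pk t
    · -- c on the long spine but beyond y : projection is y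
      have hybr : y ∈ intv T pk c := by
        rcases intv_lin ht hcsp hy with h | h
        · exact absurd h hcm
        · exact h
      have hproj : IsProjPt T (intv T pk y) c y := by
        refine ⟨hyB, ?_⟩
        intro e he
        -- e ∈ ⟨pk,y⟩, y ∈ ⟨pk,c⟩ ⇒ y ∈ ⟨c,e⟩
        rw [mem_intv_iff] at he hybr ⊢
        have t1 := hc.dist_triangle (u := e) (v := y) (w := c)
        have t2 := hc.dist_triangle (u := pk) (v := e) (w := c)
        have e1 := dcomm T c y
        have e2 := dcomm T y e
        have e3 := dcomm T c e
        omega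
      rw [projOn_eq hc hproj]
      -- prefers P y c via SemiSP(i)
      have hne : y ≠ c := fun h => hcm (h ▸ hyB)
      exact hsp.1 y c hy hcsp hne hybr
    · obtain ⟨w, hwproj, hwpref⟩ := semiSP_proj hc hsp hcsp
      by_cases hwy : w ∈ intv T pk y
      · have hproj : IsProjPt T (intv T pk y) c w :=
          ⟨hwy, fun e he => hwproj.2 e (hsub he)⟩
        rw [projOn_eq hc hproj]
        exact hwpref
      · -- w beyond y on the spine : projection is y
        have hybr : y ∈ intv T pk w := by
          rcases intv_lin ht hwproj.1 hy with h | h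
          · exact absurd h hwy
          · exact h
        have hproj : IsProjPt T (intv T pk y) c y := by
          refine ⟨hyB, ?_⟩
          intro e he
          have hwe : w ∈ intv T c e := hwproj.2 e (hsub he)
          -- y ∈ ⟨e,w⟩ : from e ∈ ⟨pk,y⟩ and y ∈ ⟨pk,w⟩
          have hyew : y ∈ intv T e w := by
            rw [mem_intv_iff] at he hybr ⊢
            have t1 := hc.dist_triangle (u := e) (v := y) (w := w)
            have t2 := hc.dist_triangle (u := pk) (v := e) (w := w)
            omega
          rw [mem_intv_iff] at hwe hyew ⊢
          have t1 := hc.dist_triangle (u := c) (v := y) (w := e)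
          have t2 := hc.dist_triangle (u := c) (v := w) (w := y)
          have e1 := dcomm T w e
          have e2 := dcomm T y e
          have e3 := dcomm T w y
          omega
        rw [projOn_eq hc hproj]
        -- prefers P y c : y ≻ w ≻ c
        have hne : y ≠ w := fun h => hwy (h ▸ hyB)
        have h1 : prefers P y w := hsp.1 y w hy hwproj.1 hne hybr
        exact pref_trans h1 hwpref

/-- C2 : a semi-single-peaked preference with peak beyond `t` has `t`
as its best alternative on `⟨t,s⟩`. -/
lemma semiSP_best_intv (ht : T.IsTree) {t s : A} {P : Pref A} (hsp : SemiSP T t P)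
    (hpk : peak P ∈ sideSet T t s) : IsBestOf P t (intv T t s) := by
  have hc := ht.isConnected
  set pk := peak P with hpkdef
  have hpk' : t ∈ intv T pk s := hpk
  refine ⟨intv_self_left hc t s, ?_⟩
  intro c hcI hcne
  have hcI' : c ∈ intv T t s := hcI
  have hcsp : c ∉ intv T pk t := by
    intro hcs
    rw [mem_intv_iff] at hcs hpk' hcI'
    have t1 := hc.dist_triangle (u := pk) (v := c) (w := s)
    have e1 := dcomm T c t
    have hct : T.dist t c = 0 := by omega
    exact hcne (dist_eq_zero' hc hct).symm
  obtain ⟨w, hwproj, hwpref⟩ := semiSP_proj hc hsp hcsp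
  have hproj : IsProjPt T (intv T pk t) c t := by
    refine ⟨intv_self_right hc pk t, ?_⟩
    intro e he
    -- t ∈ ⟨e,s⟩
    have hts : t ∈ intv T e s := by
      rw [mem_intv_iff] at he hpk' ⊢
      have t1 := hc.dist_triangle (u := e) (v := t) (w := s)
      have t2 := hc.dist_triangle (u := pk) (v := e) (w := s)
      omega
    -- then t ∈ ⟨c,e⟩ from c ∈ ⟨t,s⟩
    rw [mem_intv_iff] at hts hcI' ⊢
    have t1 := hc.dist_triangle (u := e) (v := t) (w := c)
    have t2 := hc.dist_triangle (u := e) (v := c) (w := s)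
    have e1 := dcomm T c t
    have e2 := dcomm T t e
    have e3 := dcomm T c e
    omega
  have : w = t := isProjPt_unique hc hwproj hproj
  rw [this] at hwpref
  exact hwpref

end Stmt10Proj
section Stmt10Dom

open SimpleGraph

variable {A : Type*} [Fintype A] [DecidableEq A] [Nonempty A]
variable {T : SimpleGraph A}

/-- Every alternative is either in the free zone or strictly on one of the two sides. -/
lemma cover_lemma (hc : T.Connected) {a b : A} (hdual : DualThresholds T a b) (c : A) :
    c ∈ intv T a b ∨ (c ∈ sideSet T a b ∧ c ≠ a) ∨ (c ∈ sideSet T b a ∧ c ≠ b) := by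
  by_cases hcI : c ∈ intv T a b
  · exact Or.inl hcI
  · right
    have haI : a ∈ intv T a b := intv_self_left hc a b
    have hbI : b ∈ intv T a b := intv_self_right hc a b
    by_cases hex : ∃ w, IsProjPt T (intv T a b) c w
    · have hspec := hex.choose_spec
      rcases hdual.2 c hcI with h | h
      · left
        rw [projOn, dif_pos hex] at h
        rw [h] at hspec
        constructor
        · exact hspec.2 b hbI
        · rintro rfl; exact hcI haI
      · right
        rw [projOn, dif_pos hex] at h
        rw [h] at hspec
        constructor
        · exact hspec.2 a haI
        · rintro rfl; exact hcI hbI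
    · exfalso
      rcases hdual.2 c hcI with h | h <;> rw [projOn, dif_neg hex] at h
      · exact hcI (h ▸ haI)
      · exact hcI (h ▸ hbI)

/-- The symmetric repackaging of the semi-hybrid conditions for a side `(t,s)`. -/
lemma sh_clauses (hc : T.Connected) {a b : A} (hdual : DualThresholds T a b)
    {P : Pref A} (hsem : SemiHybridPref T a b P) {t s : A}
    (hts : (t = a ∧ s = b) ∨ (t = b ∧ s = a)) :
    (peak P ∈ sideSet T t s → peak P ≠ t → SemiSP T t P) ∧
    (¬(peak P ∈ sideSet T t s ∧ peak P ≠ t) → IsBestOf P t (sideSet T t s)) := by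
  rcases hts with ⟨rfl, rfl⟩ | ⟨rfl, rfl⟩
  · constructor
    · intro h1 h2
      exact (hsem.1 ⟨h1, by simpa using h2⟩).1
    · intro h
      rcases cover_lemma hc hdual (peak P) with hin | ⟨hin, hne⟩ | ⟨hin, hne⟩
      · exact (hsem.2.2 hin).1
      · exact absurd ⟨hin, hne⟩ h
      · exact (hsem.2.1 ⟨hin, by simpa using hne⟩).2
  · constructor
    · intro h1 h2
      exact (hsem.2.1 ⟨h1, by simpa using h2⟩).1
    · intro h
      rcases cover_lemma hc hdual (peak P) with hin | ⟨hin, hne⟩ | ⟨hin, hne⟩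
      · exact (hsem.2.2 hin).2
      · exact (hsem.1 ⟨hin, by simpa using hne⟩).2
      · exact absurd ⟨hin, hne⟩ h

lemma exists_boundary {G : SimpleGraph A} {U : Set A} :
    ∀ {u v : A} (_w : G.Walk u v), u ∈ U → v ∉ U → ∃ p q, G.Adj p q ∧ p ∈ U ∧ q ∉ U := by
  intro u v w
  induction w with
  | nil => intro hu hv; exact absurd hu hv
  | @cons x m y h w ih =>
    intro hu hv
    by_cases hy : m ∈ U
    · exact ih hy hv
    · exact ⟨_, _, h, hu, hy⟩

lemma adj_unpack {D : Set (Pref A)} {p q : A} (h : (adjGraph D).Adj p q) :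
    ∃ P4 ∈ D, ∃ P5 ∈ D, peak P4 = p ∧ second P4 = q ∧ peak P5 = q ∧ second P5 = p ∧
      ∀ k : ℕ, 2 ≤ k → rk P4 k = rk P5 k := by
  rw [adjGraph, SimpleGraph.fromRel_adj] at h
  rcases h.2 with hd | hd
  · obtain ⟨P, hP, P', hP', h1, h2, h3, h4, h5⟩ := hd
    exact ⟨P, hP, P', hP', h1, h2, h3, h4, h5⟩
  · obtain ⟨P, hP, P', hP', h1, h2, h3, h4, h5⟩ := hd
    exact ⟨P', hP', P, hP, h3, h4, h1, h2, fun k hk => (h5 k hk).symm⟩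

lemma exists_peak_eq (hcard : 3 ≤ Fintype.card A) {D : Set (Pref A)}
    (hconnD : (adjGraph D).Connected) (p : A) : ∃ P ∈ D, peak P = p := by
  have : Nontrivial A := Fintype.one_lt_card_iff_nontrivial.1 (by omega)
  obtain ⟨q, hq⟩ := exists_ne p
  obtain ⟨w⟩ := hconnD.preconnected p q
  cases w with
  | nil => exact absurd rfl hq.symm
  | cons h w =>
    obtain ⟨P4, hP4, P5, hP5, h1, h2, h3, h4, h5⟩ := adj_unpack h
    exact ⟨P4, hP4, h1⟩

end Stmt10Dom
section Stmt10Wit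

open SimpleGraph

variable {A : Type*} [Fintype A] [DecidableEq A] [Nonempty A]
variable {T : SimpleGraph A}

lemma intv_comm_set (T : SimpleGraph A) (a b : A) : intv T a b = intv T b a :=
  Set.ext fun _ => ⟨intv_comm, intv_comm⟩

/-- Witness extraction when the peak of the violating preference is on side `(t,s)`. -/
lemma wit_inside (ht : T.IsTree) {t : A} {P : Pref A} (hsp : SemiSP T t P)
    {y0 z0 : A} (hmem : y0 ∈ intv T (peak P) z0) (hpref : prefers P z0 y0) :
    y0 ∈ intv T z0 t ∧ y0 ≠ t ∧ y0 ∉ intv T (peak P) t := by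
  have hc := ht.isConnected
  set pk := peak P with hpkdef
  have hyz : z0 ≠ y0 := pref_ne hpref
  have hz0sp : z0 ∉ intv T pk t := by
    intro hz
    have h1 := intv_trans hc hz hmem
    exact pref_asymm (hsp.1 y0 z0 h1.1 hz (Ne.symm hyz) hmem) hpref
  obtain ⟨w, hwproj, hwpref⟩ := semiSP_proj hc hsp hz0sp
  have hwsp := hwproj.1
  have hwpk : w ∈ intv T pk z0 := intv_comm (hwproj.2 pk (intv_self_left hc pk t))
  have hwy0 : prefers P w y0 := pref_trans hwpref hpref
  have hy0w : y0 ≠ w := Ne.symm (pref_ne hwy0)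
  have hy0sp : y0 ∉ intv T pk t := by
    intro hy0in
    have hwzy : w ∈ intv T z0 y0 := hwproj.2 y0 hy0in
    have hy0pkw : y0 ∈ intv T pk w := by
      rw [mem_intv_iff] at hwpk hmem hwzy ⊢
      have e1 := dcomm T w z0
      have e2 := dcomm T y0 z0
      have e3 := dcomm T w y0
      omega
    exact pref_asymm (hsp.1 y0 w hy0in hwsp hy0w hy0pkw) hwy0
  have hbranch : w ∈ intv T pk y0 := by
    rcases intv_lin ht hmem hwpk with h | h
    · exact absurd (intv_trans hc hwsp h).1 hy0sp
    · exact h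
  have hy0wz : y0 ∈ intv T w z0 := by
    rw [mem_intv_iff] at hbranch hmem hwpk ⊢
    have e1 := dcomm T y0 w
    omega
  have hwz0t : w ∈ intv T z0 t := hwproj.2 t (intv_self_right hc pk t)
  have hy0z0t : y0 ∈ intv T z0 t := by
    rw [mem_intv_iff] at hy0wz hwz0t ⊢
    have t1 := hc.dist_triangle (u := y0) (v := w) (w := t)
    have t2 := hc.dist_triangle (u := z0) (v := y0) (w := t)
    have e1 := dcomm T z0 w
    have e2 := dcomm T z0 y0
    have e3 := dcomm T y0 w
    omega
  refine ⟨hy0z0t, ?_, hy0sp⟩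
  intro h
  exact hy0sp (h ▸ intv_self_right hc pk t)

/-- Witness extraction when the peak of the violating preference is not beyond `t`. -/
lemma wit_outside (ht : T.IsTree) {t s : A} (hts_ne : t ≠ s) {P : Pref A}
    (hbest : IsBestOf P t (sideSet T t s))
    (hpk3 : peak P ∈ intv T t s ∨ (peak P ∈ sideSet T s t ∧ peak P ≠ s))
    {y0 z0 : A} (hy0S : y0 ∈ sideSet T t s) (hz0S : z0 ∈ sideSet T t s)
    (hmem : y0 ∈ intv T (peak P) z0) (hpref : prefers P z0 y0) :
    y0 ∈ intv T z0 t ∧ y0 ≠ t ∧ y0 ∉ intv T (peak P) t := by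
  have hc := ht.isConnected
  set pk := peak P with hpkdef
  have hyz : z0 ≠ y0 := pref_ne hpref
  have hy0t : y0 ≠ t := by
    rintro rfl
    exact pref_asymm (hbest.2 z0 hz0S hyz) hpref
  have htcross : t ∈ intv T pk z0 := by
    rcases hpk3 with hin | ⟨hin, hnes⟩
    · have hz0' : t ∈ intv T z0 s := hz0S
      rw [mem_intv_iff] at hin hz0' ⊢
      have t1 := hc.dist_triangle (u := pk) (v := t) (w := z0)
      have t2 := hc.dist_triangle (u := z0) (v := pk) (w := s)
      have e1 := dcomm T pk t
      have e2 := dcomm T t z0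
      have e3 := dcomm T pk z0
      omega
    · exact intv_chain ht hts_ne.symm hin (intv_comm hz0S)
  have hcrossy : ∀ y, y ∈ sideSet T t s → y ∈ intv T pk t → y = t := by
    intro y hyS hy
    have hyS' : t ∈ intv T y s := hyS
    rcases hpk3 with hin | ⟨hin, hnes⟩
    · rw [mem_intv_iff] at hin hyS' hy
      have t1 := hc.dist_triangle (u := y) (v := pk) (w := s)
      have t2 := hc.dist_triangle (u := y) (v := t) (w := pk)
      have e1 := dcomm T pk y
      have e2 := dcomm T y t
      have e3 := dcomm T pk t
      have h0 : T.dist y t = 0 := by omega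
      exact dist_eq_zero' hc h0
    · have hin' : s ∈ intv T pk t := hin
      rcases intv_lin ht hy hin' with h | h
      · exfalso
        rw [mem_intv_iff] at h hy hin' hyS'
        have e1 := dcomm T t s
        have e2 := dcomm T s t
        have hst0 : T.dist t s = 0 := by omega
        exact hts_ne (dist_eq_zero' hc hst0)
      · rw [mem_intv_iff] at h hy hin' hyS'
        have e1 := dcomm T s y
        have e2 := dcomm T t s
        have h0 : T.dist y t = 0 := by omega
        exact dist_eq_zero' hc h0
  have hy0nsp : y0 ∉ intv T pk t := fun h => hy0t (hcrossy y0 hy0S h)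
  have hbr : t ∈ intv T pk y0 := by
    rcases intv_lin ht hmem htcross with h | h
    · exact absurd h hy0nsp
    · exact h
  have hy0tz : y0 ∈ intv T z0 t := by
    rw [mem_intv_iff] at hbr hmem htcross ⊢
    have e1 := dcomm T t y0
    have e2 := dcomm T t z0
    have e3 := dcomm T y0 z0
    have e4 := dcomm T y0 t
    omega
  exact ⟨hy0tz, hy0t, hy0nsp⟩

end Stmt10Wit
section Stmt10Main

open SimpleGraph

variable {A : Type*} [Fintype A] [DecidableEq A] [Nonempty A]

lemma forward_side (hcard : 3 ≤ Fintype.card A)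
    {T : SimpleGraph A} (ht : T.IsTree) {D : Set (Pref A)}
    (hconnD : (adjGraph D).Connected) {t s : A}
    (hSH1 : ∀ P ∈ D, peak P ∈ sideSet T t s → peak P ≠ t → SemiSP T t P)
    (hwit : ∃ x0, (x0 ∈ sideSet T t s ∧ x0 ≠ t) ∧ ∃ P0 ∈ D, ∃ c0,
      x0 ∈ intv T c0 t ∧ c0 ≠ x0 ∧ peak P0 ∉ sideSet T x0 t ∧ prefers P0 c0 x0) :
    ∃ x y : A, CriticalSpot D T x y ∧
      (x ∈ sideSet T t s ∧ x ≠ t) ∧ (y ∈ sideSet T t s ∧ y ≠ t) := by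
  classical
  have hc := ht.isConnected
  set Vp : A → Prop := fun x => (x ∈ sideSet T t s ∧ x ≠ t) ∧ ∃ P0 ∈ D, ∃ c0,
      x ∈ intv T c0 t ∧ c0 ≠ x ∧ peak P0 ∉ sideSet T x t ∧ prefers P0 c0 x with hVpdef
  obtain ⟨x0, hx0⟩ := hwit
  have hVne : (Finset.univ.filter Vp).Nonempty :=
    ⟨x0, by simp only [Finset.mem_filter, Finset.mem_univ, true_and]; exact hx0⟩
  obtain ⟨xh, hxhmem, hxhmax⟩ :=
    Finset.exists_max_image (Finset.univ.filter Vp) (fun x => T.dist t x) hVne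
  rw [Finset.mem_filter] at hxhmem
  obtain ⟨-, ⟨hxhS, hxht⟩, Ph, hPhD, ch, hchB, hchne, hpkh, hprefh⟩ := hxhmem
  have hmax : ∀ x', Vp x' → T.dist t x' ≤ T.dist t xh := fun x' h =>
    hxhmax x' (by simp only [Finset.mem_filter, Finset.mem_univ, true_and]; exact h)
  have hxc_ne : xh ≠ ch := Ne.symm hchne
  obtain ⟨p, hp, hpl⟩ := hc.exists_path_of_dist xh ch
  cases p with
  | nil => exact absurd rfl hxc_ne
  | @cons _ m _ hadj q =>
    have hq : q.IsPath := hp.of_cons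
    have hql : q.length = T.dist m ch := path_length_eq_dist ht hq
    rw [SimpleGraph.Walk.length_cons] at hpl
    have hd1 : T.dist xh m = 1 := dist_adj hadj
    have hu1intv : m ∈ intv T xh ch := by
      rw [mem_intv_iff, hd1, ← hpl, hql]
      omega
    have hmxh_ne : m ≠ xh := (hadj.symm).ne
    have h1 := intv_trans hc hchB (intv_comm hu1intv)
    have hmB : m ∈ intv T ch t := h1.1
    have hxm : xh ∈ intv T m t := h1.2
    set B : Set A := sideSet T m t with hBdef
    have hchBu : ch ∈ B := hmB
    have hu1B : m ∈ B := intv_self_left hc m t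
    have hxhB : xh ∉ B := by
      intro h
      have h' : T.dist xh m + T.dist m t = T.dist xh t := h
      rw [mem_intv_iff] at hxm
      have e1 := dcomm T m xh
      omega
    have hmS : m ∈ sideSet T t s ∧ m ≠ t := by
      have hxS' : t ∈ intv T xh s := hxhS
      constructor
      · exact intv_chain ht hxht hxm hxS'
      · intro h
        rw [h] at hxm
        exact hxht (intv_self hc hxm)
    have hSsub : ∀ z ∈ B, z ∈ sideSet T t s ∧ z ≠ t := by
      intro z hz
      have hz' : m ∈ intv T z t := hz
      constructor
      · exact intv_chain ht hmS.2 hz' hmS.1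
      · intro h
        rw [h] at hz'
        exact hmS.2 (intv_self hc hz')
    have hBxh : ∀ z ∈ B, xh ∈ intv T z t := fun z hz => (intv_trans' hc hz hxm).1
    have hdepth : T.dist t m = T.dist t xh + 1 := by
      rw [mem_intv_iff] at hxm
      have e1 := dcomm T m xh
      have e2 := dcomm T m t
      have e3 := dcomm T xh t
      omega
    have hbest : ∀ P ∈ D, peak P ∉ B → IsBestOf P m B := by
      intro P hPD hpk
      refine ⟨hu1B, ?_⟩
      intro e he hne
      by_contra hnp
      have hpe : prefers P e m := by
        rcases pref_total (P := P) hne with h | h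
        · exact h
        · exact absurd h hnp
      have hVm : Vp m := ⟨hmS, P, hPD, e, he, hne, hpk, hpe⟩
      have := hmax m hVm
      omega
    have hadj' : T.Adj m xh := hadj.symm
    have hgate : ∀ z, m ∈ intv T z xh ↔ m ∈ intv T z t := fun z => gate_iff ht hadj' hxm z
    have hseteq : sideSet T m xh = B := Set.ext fun z => hgate z
    have hdich : ∀ z, z ∉ B → z ∈ sideSet T xh m := by
      intro z hz
      rcases edge_dichotomy ht hadj' z with h | h
      · exact absurd ((hgate z).1 h) hz
      · exact h
    have hdisj : ∀ z, z ∈ sideSet T xh m → z ∉ B := by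
      intro z h1 h2
      have h2' := (hgate z).2 h2
      have h1' : T.dist z xh + T.dist xh m = T.dist z m := h1
      rw [mem_intv_iff] at h2'
      have e1 := dcomm T m xh
      omega
    have hspineall : ∀ P ∈ D, peak P ∈ B →
        (SemiSP T t P ∧ xh ∈ intv T (peak P) t ∧ m ∈ intv T (peak P) t ∧
          m ∈ intv T (peak P) xh) := by
      intro P hPD hpk
      have hS := hSsub (peak P) hpk
      have hsp := hSH1 P hPD hS.1 hS.2
      have hmm : m ∈ intv T (peak P) t := hpk
      have hxx : xh ∈ intv T (peak P) t := (intv_trans' hc hmm hxm).1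
      have hmx : m ∈ intv T (peak P) xh := intv_mid hc hmm hxm
      exact ⟨hsp, hxx, hmm, hmx⟩
    have hsemiall : ∀ P ∈ D, peak P ∈ B → SemiSP T xh P := by
      intro P hPD hpk
      obtain ⟨hsp, hxx, -, -⟩ := hspineall P hPD hpk
      exact semiSP_restrict ht hsp hxx
    have hF1 : ∀ P ∈ D, peak P ∈ B → prefers P m xh := by
      intro P hPD hpk
      obtain ⟨hsp, hxx, hmm, hmx⟩ := hspineall P hPD hpk
      exact hsp.1 m xh hmm hxx hmxh_ne hmx
    have hF3 : ∀ P ∈ D, peak P = m → second P ∉ B → second P = xh := by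
      intro P hPD hpkP hsB
      have hsp : SemiSP T t P := hSH1 P hPD (by rw [hpkP]; exact hmS.1) (by rw [hpkP]; exact hmS.2)
      have hq'ne : second P ≠ m := fun h => hsB (h ▸ hu1B)
      by_cases hq'sp : second P ∈ intv T (peak P) t
      · by_cases hq'x : second P = xh
        · exact hq'x
        · exfalso
          have hq'sp' : second P ∈ intv T m t := by rw [hpkP] at hq'sp; exact hq'sp
          have hxin : xh ∈ intv T m (second P) := by
            rcases intv_lin ht hq'sp' hxm with h | h
            · exfalso
              rw [mem_intv_iff] at h
              have e1 := dcomm T xh m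
              have h0 : T.dist m (second P) = 0 ∨ T.dist (second P) xh = 0 := by omega
              rcases h0 with h0 | h0
              · exact hq'ne (dist_eq_zero' hc h0).symm
              · exact hq'x (dist_eq_zero' hc h0)
            · exact h
          have hpref1 : prefers P xh (second P) := by
            refine hsp.1 xh (second P) ?_ hq'sp ?_ ?_
            · rw [hpkP]; exact hxm
            · exact fun h => hq'x h.symm
            · rw [hpkP]; exact hxin
          have hpref2 : prefers P (second P) xh := by
            refine prefers_second hcard ?_ ?_
            · rw [hpkP]; exact Ne.symm hmxh_ne
            · exact fun h => hq'x h.symm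
          exact pref_asymm hpref1 hpref2
      · obtain ⟨w, hwproj, hwpref⟩ := semiSP_proj hc hsp hq'sp
        exfalso
        by_cases hwm : w = m
        · have hwt := hwproj.2 t (intv_self_right hc (peak P) t)
          rw [hwm] at hwt
          exact hsB hwt
        · have hwpk2 : w ≠ peak P := by rw [hpkP]; exact hwm
          have hwq' : w ≠ second P := fun h => hq'sp (h ▸ hwproj.1)
          have h2 := prefers_second hcard hwpk2 hwq'
          exact pref_asymm hwpref h2
    have hPhpk : peak Ph ∉ B := fun h => hpkh (hBxh (peak Ph) h)
    have hPhpref : prefers Ph m xh := by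
      by_cases h : ch = m
      · rw [← h]; exact hprefh
      · exact pref_trans ((hbest Ph hPhD hPhpk).2 ch hchBu h) hprefh
    have hiii : ∃ P ∈ D, ∃ P' ∈ D, peak P = peak P' ∧ peak P ∈ sideSet T xh m ∧
        prefers P xh m ∧ prefers P' m xh := by
      by_contra hniii
      push_neg at hniii
      set U : Set A := {pp | pp ∉ B ∧ ∀ Q ∈ D, peak Q = pp → prefers Q m xh} with hUdef
      have hUn : peak Ph ∈ U := by
        refine ⟨hPhpk, ?_⟩
        intro Q hQD hQpk
        by_contra hQn
        have hQpref : prefers Q xh m := by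
          rcases pref_total (P := Q) (Ne.symm hmxh_ne) with h | h
          · exact h
          · exact absurd h hQn
        exact hniii Q hQD Ph hPhD hQpk (hQpk ▸ hdich _ hPhpk) hQpref hPhpref
      have hxhU : xh ∉ U := by
        obtain ⟨Q, hQD, hQpk⟩ := exists_peak_eq hcard hconnD xh
        intro h
        have h1 := h.2 Q hQD hQpk
        have h2 : prefers Q xh m := by
          have := prefers_peak (P := Q) (x := m) (by rw [hQpk]; exact hmxh_ne)
          rwa [hQpk] at this
        exact pref_asymm h1 h2
      obtain ⟨wk⟩ := hconnD.preconnected (peak Ph) xh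
      obtain ⟨pp, qq, hpq, hpU, hqU⟩ := exists_boundary wk hUn hxhU
      obtain ⟨P4, hP4D, P5, hP5D, e1, e2, e3, e4, etail⟩ := adj_unpack hpq
      have hP4pref : prefers P4 m xh := hpU.2 P4 hP4D e1
      by_cases hqB : qq ∈ B
      · have hq_eq : qq = m := by
          by_contra hqm
          have hb := (hbest P4 hP4D (by rw [e1]; exact hpU.1)).2 qq hqB hqm
          have hmp : m ≠ peak P4 := by rw [e1]; exact fun h => hpU.1 (h ▸ hu1B)
          have hmq : m ≠ second P4 := by rw [e2]; exact fun h => hqm h.symm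
          have hs := prefers_second hcard hmp hmq
          rw [e2] at hs
          exact pref_asymm hb hs
        have hP5pk : peak P5 = m := by rw [e3, hq_eq]
        have hpx : pp = xh := by
          rw [← e4]
          exact hF3 P5 hP5D hP5pk (by rw [e4]; exact hpU.1)
        exact hxhU (hpx ▸ hpU)
      · have hq_side : qq ∈ sideSet T xh m := hdich qq hqB
        have hQ0 : ∃ Q0 ∈ D, peak Q0 = qq ∧ prefers Q0 xh m := by
          by_contra hno
          push_neg at hno
          apply hqU
          refine ⟨hqB, ?_⟩
          intro Q hQD hQpk
          rcases pref_total (P := Q) (Ne.symm hmxh_ne) with h | h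
          · exact absurd h (hno Q hQD hQpk)
          · exact h
        obtain ⟨Q0, hQ0D, hQ0pk, hQ0pref⟩ := hQ0
        have hP5pref : prefers P5 xh m := by
          rcases pref_total (P := P5) (Ne.symm hmxh_ne) with h | h
          · exact h
          · exact absurd h fun hn =>
              hniii Q0 hQ0D P5 hP5D (by rw [hQ0pk, e3]) (by rw [hQ0pk]; exact hq_side) hQ0pref hn
        by_cases hqx : qq = xh
        · have hmp : m ≠ peak P4 := by rw [e1]; exact fun h => hpU.1 (h ▸ hu1B)
          have hmq : m ≠ second P4 := by rw [e2, hqx]; exact hmxh_ne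
          have hs := prefers_second hcard hmp hmq
          rw [e2, hqx] at hs
          exact pref_asymm hs hP4pref
        · have hpx : pp ≠ xh := fun h => hxhU (h ▸ hpU)
          have hmnp : m ≠ pp := fun h => hpU.1 (h ▸ hu1B)
          have hmnq : m ≠ qq := fun h => hqB (h ▸ hu1B)
          have hiff := tail_pref_iff hcard etail (u := m) (v := xh)
            (by rw [e1]; exact hmnp) (by rw [e2]; exact hmnq)
            (by rw [e1]; exact fun h => hpx h.symm) (by rw [e2]; exact fun h => hqx h.symm)
          exact pref_asymm hP5pref (hiff.1 hP4pref)
    refine ⟨m, xh, ⟨hadj', ?_, ?_, hiii⟩, ⟨hmS.1, hmS.2⟩, ⟨hxhS, hxht⟩⟩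
    · intro P hPD hpk
      exact hsemiall P hPD ((hgate (peak P)).1 hpk)
    · intro P hPD hpk
      rw [hseteq]
      exact hbest P hPD (hdisj (peak P) hpk)

end Stmt10Main
/-- an `(a,b)`-semi-hybrid domain on a tree `T` is not contained
in the `(a,b)`-hybrid domain on `T` iff there is a critical spot `(x, y)` in `T`
with `x, y ∈ A^{a⇀b}∖{a}` or `x, y ∈ A^{b⇀a}∖{b}`. -/
theorem stmt10_sh_critical_spot (D : Set (Pref A)) (hD : D.Nonempty)
    (hcard : 3 ≤ Fintype.card A)
    (T : SimpleGraph A) (a b : A) (hsh : SemiHybridDomainOn D T a b) :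
    ¬ (D ⊆ {P | HybridPref T a b P}) ↔
    ∃ x y : A, CriticalSpot D T x y ∧
      ((x ∈ sideSet T a b \ {a} ∧ y ∈ sideSet T a b \ {a}) ∨
       (x ∈ sideSet T b a \ {b} ∧ y ∈ sideSet T b a \ {b})) := by
  obtain ⟨htree, hdual, hsub, hconnD, hmin, hleaf⟩ := hsh
  have hc := htree.isConnected
  have hab : a ≠ b := hdual.1
  constructor
  · intro hnot
    obtain ⟨Pb, hPD, hnH⟩ := Set.not_subset.mp hnot
    have hsem : SemiHybridPref T a b Pb := hsub hPD
    have hH2 : peak Pb ∈ sideSet T a b \ {a} → IsBestOf Pb a (intv T a b) := by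
      intro h
      exact semiSP_best_intv htree (hsem.1 h).1 h.1
    have hH3 : peak Pb ∈ sideSet T b a \ {b} → IsBestOf Pb b (intv T a b) := by
      intro h
      have := semiSP_best_intv htree (hsem.2.1 h).1 h.1
      rw [intv_comm_set T a b]
      exact this
    have hH1 : ¬ (∀ y z : A, ((y ∈ sideSet T a b ∧ z ∈ sideSet T a b) ∨
        (y ∈ sideSet T b a ∧ z ∈ sideSet T b a)) → y ≠ z →
        y ∈ intv T (peak Pb) z → prefers Pb y z) := fun h => hnH ⟨h, hH2, hH3⟩
    push_neg at hH1
    obtain ⟨y0, z0, hcond, hne0, hmem0, hnp⟩ := hH1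
    have hpref0 : prefers Pb z0 y0 := by
      rcases pref_total (P := Pb) hne0 with h | h
      · exact absurd h hnp
      · exact h
    have key : ∀ t s : A, ((t = a ∧ s = b) ∨ (t = b ∧ s = a)) →
        y0 ∈ sideSet T t s → z0 ∈ sideSet T t s →
        ∃ x y, CriticalSpot D T x y ∧
          (x ∈ sideSet T t s ∧ x ≠ t) ∧ (y ∈ sideSet T t s ∧ y ≠ t) := by
      intro t s hts hyS hzS
      have hSH1 : ∀ P ∈ D, peak P ∈ sideSet T t s → peak P ≠ t → SemiSP T t P :=
        fun P hP h1 h2 => (sh_clauses hc hdual (hsub hP) hts).1 h1 h2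
      have hwit : ∃ x0, (x0 ∈ sideSet T t s ∧ x0 ≠ t) ∧ ∃ P0 ∈ D, ∃ c0,
          x0 ∈ intv T c0 t ∧ c0 ≠ x0 ∧ peak P0 ∉ sideSet T x0 t ∧ prefers P0 c0 x0 := by
        by_cases hpkside : peak Pb ∈ sideSet T t s ∧ peak Pb ≠ t
        · have hsp := hSH1 Pb hPD hpkside.1 hpkside.2
          obtain ⟨w1, w2, w3⟩ := wit_inside htree hsp hmem0 hpref0
          exact ⟨y0, ⟨hyS, w2⟩, Pb, hPD, z0, w1, pref_ne hpref0, w3, hpref0⟩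
        · have hbest := (sh_clauses hc hdual (hsub hPD) hts).2 hpkside
          have hts_ne : t ≠ s := by
            rcases hts with ⟨rfl, rfl⟩ | ⟨rfl, rfl⟩
            · exact hab
            · exact hab.symm
          have hpk3 : peak Pb ∈ intv T t s ∨ (peak Pb ∈ sideSet T s t ∧ peak Pb ≠ s) := by
            rcases hts with ⟨rfl, rfl⟩ | ⟨rfl, rfl⟩
            · rcases cover_lemma hc hdual (peak Pb) with h | h | h
              · exact Or.inl h
              · exact absurd ⟨h.1, h.2⟩ hpkside
              · exact Or.inr h
            · rcases cover_lemma hc hdual (peak Pb) with h | h | h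
              · exact Or.inl (intv_comm h)
              · exact Or.inr h
              · exact absurd ⟨h.1, h.2⟩ hpkside
          obtain ⟨w1, w2, w3⟩ := wit_outside htree hts_ne hbest hpk3 hyS hzS hmem0 hpref0
          exact ⟨y0, ⟨hyS, w2⟩, Pb, hPD, z0, w1, pref_ne hpref0, w3, hpref0⟩
      exact forward_side hcard htree hconnD hSH1 hwit
    rcases hcond with ⟨hyS, hzS⟩ | ⟨hyS, hzS⟩
    · obtain ⟨x, y, hspot, ⟨hx1, hx2⟩, ⟨hy1, hy2⟩⟩ := key a b (Or.inl ⟨rfl, rfl⟩) hyS hzS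
      exact ⟨x, y, hspot, Or.inl ⟨⟨hx1, by simpa using hx2⟩, ⟨hy1, by simpa using hy2⟩⟩⟩
    · obtain ⟨x, y, hspot, ⟨hx1, hx2⟩, ⟨hy1, hy2⟩⟩ := key b a (Or.inr ⟨rfl, rfl⟩) hyS hzS
      exact ⟨x, y, hspot, Or.inr ⟨⟨hx1, by simpa using hx2⟩, ⟨hy1, by simpa using hy2⟩⟩⟩
  · rintro ⟨x, y, hcs, hside⟩ hsubH
    obtain ⟨hadjxy, h1, h2, P, hPD, P', hP'D, hpkeq, hpkside, hPyx, hP'xy⟩ := hcs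
    have hH := hsubH hP'D
    have hyx : y ∈ intv T (peak P') x := by rw [← hpkeq]; exact hpkside
    have hcond : (y ∈ sideSet T a b ∧ x ∈ sideSet T a b) ∨
        (y ∈ sideSet T b a ∧ x ∈ sideSet T b a) := by
      rcases hside with ⟨hx, hy⟩ | ⟨hx, hy⟩
      · exact Or.inl ⟨hy.1, hx.1⟩
      · exact Or.inr ⟨hy.1, hx.1⟩
    have := hH.1 y x hcond (Ne.symm hadjxy.ne) hyx
    exact pref_asymm this hP'xy
end

section
/- Fix two voters N = {1, 2}, a path-connected domain D and a strategy-proof rule f : D^2 → A, and let (x_1, …, x_v) be a path in the adjacency graph G_∼. Then: (i) if f(P_1, P_2) = x_1 for all P_1 ∈ D^{x_1} and P_2 ∈ D^{x_2}, then f(P_1, P_2) = x_k for all 1 ≤ k ≤ k' ≤ v, P_1 ∈ D^{x_k} and P_2 ∈ D^{x_{k'}}; (ii) if f(P_1, P_2) = x_1 for all P_1 ∈ D^{x_2} and P_2 ∈ D^{x_1}, then f(P_1, P_2) = x_k for all 1 ≤ k ≤ k' ≤ v, P_1 ∈ D^{x_{k'}} and P_2 ∈ D^{x_k}; (iii) if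 f(P_1, P_2) = x_v for all P_1 ∈ D^{x_v} and P_2 ∈ D^{x_{v-1}}, then f(P_1, P_2) = x_k for all 1 ≤ k' ≤ k ≤ v, P_1 ∈ D^{x_k} and P_2 ∈ D^{x_{k'}}; (iv) if f(P_1, P_2) = x_v for all P_1 ∈ D^{x_{v-1}} and P_2 ∈ D^{x_v}, then f(P_1, P_2) = x_k for all 1 ≤ k' ≤ k ≤ v, P_1 ∈ D^{x_{k'}} and P_2 ∈ D^{x_k}. -/
open Classical

set_option linter.unusedSectionVars false
set_option linter.unusedVariables false

variable {A : Type*} [Fintype A] [DecidableEq A] [Nonempty A]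

/-!
Write `F P₁ P₂` for the outcome of the two-voter rule. Along an edge `a ∼ b` of `G_∼` the domain
contains preferences `Q, Q'` that differ only by swapping their top two alternatives `a, b`, and
strategy-proofness forces a voter switching between them to either leave the outcome unchanged
or move it from `a` to `b`. If voter 1 wins at peaks `(a, b)`, this local control shows that
voter 1 also wins at peaks `(b, c)` for the next vertex `c` of the path, and that winning at
`(b, z)` can be pulled back to winning at `(a, z)`. Induction along the path gives (i); the other
three parts follow by exchanging the voters and reversing the path.
-/

lemma rk_symm_apply (P : Pref A) (z : A) : rk P (P.symm z) = z := by
  rw [rk, dif_pos (P.symm z).isLt]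
  exact P.apply_symm_apply z

lemma symm_rk_val (P : Pref A) {k : ℕ} (hk : k < Fintype.card A) : (P.symm (rk P k) : ℕ) = k := by
  rw [rk, dif_pos hk, P.symm_apply_apply]

lemma prefers_irrefl (P : Pref A) (z : A) : ¬ prefers P z z :=
  lt_irrefl _

lemma one_lt_card_of_prefers {P : Pref A} {z w : A} (h : prefers P z w) :
    1 < Fintype.card A :=
  Fintype.one_lt_card_iff.2 ⟨z, w, fun e => prefers_irrefl P w (e ▸ h)⟩

lemma not_prefers_peak (P : Pref A) (z : A) : ¬ prefers P z (peak P) := by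
  intro h
  have h0 : (P.symm (peak P) : ℕ) = 0 := symm_rk_val P Fintype.card_pos
  exact Nat.not_lt_zero _ (h0 ▸ Fin.lt_def.1 h)

lemma eq_peak_of_prefers_second {P : Pref A} {z : A} (h : prefers P z (second P)) :
    z = peak P := by
  have h1 : (P.symm (second P) : ℕ) = 1 := symm_rk_val P (one_lt_card_of_prefers h)
  have hz : (P.symm z : ℕ) = 0 := by have := Fin.lt_def.1 h; omega
  rw [← rk_symm_apply P z, hz]
  rfl

/-- `DomAdjacent D a b` unfolds to `∃ Q ∈ D, ∃ Q' ∈ D, IsTopSwap Q Q' a b`. -/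
def IsTopSwap (Q Q' : Pref A) (a b : A) : Prop :=
  peak Q = a ∧ second Q = b ∧ peak Q' = b ∧ second Q' = a ∧ ∀ k : ℕ, 2 ≤ k → rk Q k = rk Q' k

lemma IsTopSwap.symm {Q Q' : Pref A} {a b : A} (h : IsTopSwap Q Q' a b) : IsTopSwap Q' Q b a :=
  ⟨h.2.2.1, h.2.2.2.1, h.1, h.2.1, fun k hk => (h.2.2.2.2 k hk).symm⟩

lemma IsTopSwap.rank_cases (hcard : 1 < Fintype.card A) {Q Q' : Pref A} {a b : A}
    (h : IsTopSwap Q Q' a b) (z : A) :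
    (z = a ∧ (Q.symm z : ℕ) = 0 ∧ (Q'.symm z : ℕ) = 1) ∨
    (z = b ∧ (Q.symm z : ℕ) = 1 ∧ (Q'.symm z : ℕ) = 0) ∨
    (2 ≤ (Q.symm z : ℕ) ∧ (Q'.symm z : ℕ) = Q.symm z) := by
  obtain ⟨hpQ, hsQ, hpQ', hsQ', htail⟩ := h
  have hz := rk_symm_apply Q z
  obtain hi | hi | hge : (Q.symm z : ℕ) = 0 ∨ (Q.symm z : ℕ) = 1 ∨ 2 ≤ (Q.symm z : ℕ) := by omega
  · rw [hi] at hz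
    obtain rfl : z = a := hz.symm.trans hpQ
    exact Or.inl ⟨rfl, hi, by rw [← hsQ']; exact symm_rk_val Q' hcard⟩
  · rw [hi] at hz
    obtain rfl : z = b := hz.symm.trans hsQ
    exact Or.inr (Or.inl ⟨rfl, hi, by rw [← hpQ']; exact symm_rk_val Q' Fintype.card_pos⟩)
  · refine Or.inr (Or.inr ⟨hge, ?_⟩)
    conv_lhs => rw [← hz, htail _ hge]
    exact symm_rk_val Q' (Q.symm z).isLt

lemma IsTopSwap.eq_of_prefers {Q Q' : Pref A} {a b c d : A} (h : IsTopSwap Q Q' a b)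
    (hQ : prefers Q c d) (hQ' : prefers Q' d c) : c = a ∧ d = b := by
  have hcard := one_lt_card_of_prefers hQ
  rw [prefers, Fin.lt_def] at hQ hQ'
  rcases h.rank_cases hcard c with ⟨rfl, hc, hc'⟩ | ⟨rfl, hc, hc'⟩ | ⟨hc, hc'⟩ <;>
  rcases h.rank_cases hcard d with ⟨rfl, hd, hd'⟩ | ⟨rfl, hd, hd'⟩ | ⟨hd, hd'⟩ <;>
  first | exact ⟨rfl, rfl⟩ | omega

lemma exists_isTopSwap_of_adj {D : Set (Pref A)} {a b : A} (h : (adjGraph D).Adj a b) :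
    ∃ Q ∈ D, ∃ Q' ∈ D, IsTopSwap Q Q' a b := by
  rcases (SimpleGraph.fromRel_adj _ a b).1 h with ⟨-, hab | hba⟩
  · exact hab
  · obtain ⟨Q, hQ, Q', hQ', hs⟩ := hba
    exact ⟨Q', hQ', Q, hQ, IsTopSwap.symm hs⟩

/-- Strategy-proofness of one voter, `g` being the outcome as a function of that voter's report
when the other reports are fixed. -/
def VoterSP (D : Set (Pref A)) (g : Pref A → A) : Prop :=
  ∀ P ∈ D, ∀ Q ∈ D, g P = g Q ∨ prefers P (g P) (g Q)

namespace VoterSP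

variable {D : Set (Pref A)} {g : Pref A → A} {P Q : Pref A}

lemma eq_peak (hg : VoterSP D g) (hP : P ∈ D) (hQ : Q ∈ D) (h : g Q = peak P) :
    g P = peak P := by
  rcases hg P hP Q hQ with e | hlt
  · rw [e, h]
  · exact absurd (h ▸ hlt) (not_prefers_peak P _)

lemma eq_peak_or_eq_second (hg : VoterSP D g) (hP : P ∈ D) (hQ : Q ∈ D)
    (h : g Q = second P) : g P = peak P ∨ g P = second P := by
  rcases hg P hP Q hQ with e | hlt
  · exact Or.inr (e.trans h)
  · exact Or.inl (eq_peak_of_prefers_second (h ▸ hlt))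

lemma eq_or_of_isTopSwap (hg : VoterSP D g) (hP : P ∈ D) (hQ : Q ∈ D) {a b : A}
    (hs : IsTopSwap P Q a b) : g P = g Q ∨ (g P = a ∧ g Q = b) := by
  rcases hg P hP Q hQ with e | h₁
  · exact Or.inl e
  rcases hg Q hQ P hP with e | h₂
  · exact Or.inl e.symm
  · exact Or.inr (hs.eq_of_prefers h₁ h₂)

end VoterSP

structure IsSPRule2 (D : Set (Pref A)) (F : Pref A → Pref A → A) : Prop where
  unanimous : ∀ a : A, ∀ P₁ ∈ D, ∀ P₂ ∈ D, peak P₁ = a → peak P₂ = a → F P₁ P₂ = a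
  sp_left : ∀ P₂ ∈ D, VoterSP D (F · P₂)
  sp_right : ∀ P₁ ∈ D, VoterSP D (F P₁)

lemma isSPRule2_of_isRule {D : Set (Pref A)} {f : (Fin 2 → Pref A) → A} (hrule : IsRule D f)
    (hsp : StrategyProof D f) : IsSPRule2 D (fun P₁ P₂ => f ![P₁, P₂]) := by
  have hdom : ∀ {P₁ P₂}, P₁ ∈ D → P₂ ∈ D → InDom D ![P₁, P₂] := fun h₁ h₂ =>
    Fin.forall_fin_two.2 ⟨h₁, h₂⟩
  refine ⟨fun a P₁ h₁ P₂ h₂ e₁ e₂ => hrule _ (hdom h₁ h₂) a (Fin.forall_fin_two.2 ⟨e₁, e₂⟩),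
    fun P₂ h₂ P h Q hQ => ?_, fun P₁ h₁ P h Q hQ => ?_⟩
  · have e : Function.update ![P, P₂] 0 Q = ![Q, P₂] := by funext i; fin_cases i <;> rfl
    simpa [e] using hsp _ (hdom h h₂) 0 Q hQ
  · have e : Function.update ![P₁, P] 1 Q = ![P₁, Q] := by funext i; fin_cases i <;> rfl
    simpa [e] using hsp _ (hdom h₁ h) 1 Q hQ

def LeftWins (D : Set (Pref A)) (F : Pref A → Pref A → A) (a b : A) : Prop :=
  ∀ P₁ ∈ D, ∀ P₂ ∈ D, peak P₁ = a → peak P₂ = b → F P₁ P₂ = a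

lemma leftWins_flip_iff {D : Set (Pref A)} {F : Pref A → Pref A → A} {a b : A} :
    LeftWins D (flip F) a b ↔ ∀ P₁ ∈ D, ∀ P₂ ∈ D, peak P₁ = b → peak P₂ = a → F P₁ P₂ = a :=
  ⟨fun h P₁ h₁ P₂ h₂ e₁ e₂ => h P₂ h₂ P₁ h₁ e₂ e₁, fun h P₁ h₁ P₂ h₂ e₁ e₂ => h P₂ h₂ P₁ h₁ e₂ e₁⟩

namespace IsSPRule2

variable {D : Set (Pref A)} {F : Pref A → Pref A → A}

lemma flip (hF : IsSPRule2 D F) : IsSPRule2 D (flip F) :=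
  ⟨fun a P₁ h₁ P₂ h₂ e₁ e₂ => hF.unanimous a P₂ h₂ P₁ h₁ e₂ e₁, hF.sp_right, hF.sp_left⟩

lemma leftWins_self (hF : IsSPRule2 D F) (a : A) : LeftWins D F a a :=
  fun P₁ h₁ P₂ h₂ => hF.unanimous a P₁ h₁ P₂ h₂

lemma leftWins_of_isTopSwap (hF : IsSPRule2 D F) {a b z : A} (hab : a ≠ b) {Q Q' S : Pref A}
    (hQ : Q ∈ D) (hQ' : Q' ∈ D) (hs : IsTopSwap Q Q' a b) (hS : S ∈ D) (hpS : peak S = b)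
    (hwin : F Q S = a) (h : LeftWins D F b z) : LeftWins D F a z := by
  intro P₁ h₁ P₂ h₂ e₁ e₂
  have hQ'P₂ : F Q' P₂ = b := h Q' hQ' P₂ h₂ hs.2.2.1 e₂
  have hQP₂ : F Q P₂ = a := by
    rcases (hF.sp_left P₂ h₂).eq_or_of_isTopSwap hQ hQ' hs with e | ⟨e, -⟩
    -- otherwise voter 2, at `S`, would obtain its peak `b` against `Q` by reporting `P₂`
    · have hQS : F Q S = peak S := (hF.sp_right Q hQ).eq_peak hS h₂ (by rw [hpS, ← hQ'P₂, e])
      exact absurd (hwin.symm.trans (hQS.trans hpS)) hab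
    · exact e
  exact (hF.sp_left P₂ h₂).eq_peak h₁ hQ (hQP₂.trans e₁.symm) |>.trans e₁

lemma leftWins_trans (hF : IsSPRule2 D F) {a b z : A} (hab : (adjGraph D).Adj a b)
    (h₁ : LeftWins D F a b) (h₂ : LeftWins D F b z) : LeftWins D F a z := by
  obtain ⟨Q, hQ, Q', hQ', hs⟩ := exists_isTopSwap_of_adj hab
  exact hF.leftWins_of_isTopSwap hab.ne hQ hQ' hs hQ' hs.2.2.1 (h₁ Q hQ Q' hQ' hs.1 hs.2.2.1) h₂

lemma leftWins_next (hF : IsSPRule2 D F) {a b c : A} (hab : (adjGraph D).Adj a b)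
    (hbc : (adjGraph D).Adj b c) (hac : a ≠ c) (h : LeftWins D F a b) : LeftWins D F b c := by
  obtain ⟨R, hR, R', hR', hsR⟩ := exists_isTopSwap_of_adj hab
  obtain ⟨Q, hQ, Q', hQ', hsQ⟩ := exists_isTopSwap_of_adj hbc
  have hRQ : F R Q = a := h R hR Q hQ hsR.1 hsQ.1
  have hRQ' : F R Q' = a := by
    rcases (hF.sp_right R hR).eq_or_of_isTopSwap hQ hQ' hsQ with e | ⟨e, -⟩
    · exact e ▸ hRQ
    · exact absurd (hRQ.symm.trans e) hab.ne
  have hR'Q : F R' Q = b := hF.unanimous b R' hR' Q hQ hsR.2.2.1 hsQ.1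
  -- by reporting `Q`, voter 2 at `Q'` secures its second choice `b`
  have hR'Q' : F R' Q' = c ∨ F R' Q' = b := by
    rw [← hsQ.2.2.1, ← hsQ.2.2.2.1]
    exact (hF.sp_right R' hR').eq_peak_or_eq_second hQ' hQ (hR'Q.trans hsQ.2.2.2.1.symm)
  have hR'Q'b : F R' Q' = b := by
    rcases (hF.sp_left Q' hQ').eq_or_of_isTopSwap hR hR' hsR with e | ⟨-, e⟩
    · rcases hR'Q' with e' | e'
      · exact absurd ((hRQ'.symm.trans e).trans e') hac
      · exact e'
    · exact e
  have hQQ' : F Q Q' = b :=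
    (hF.sp_left Q' hQ').eq_peak hQ hR' (hR'Q'b.trans hsQ.1.symm) |>.trans hsQ.1
  exact hF.leftWins_of_isTopSwap hbc.ne hQ hQ' hsQ hQ' hsQ.2.2.1 hQQ' (hF.leftWins_self c)

lemma leftWins_of_le (hF : IsSPRule2 D F) {v : ℕ} {x : ℕ → A}
    (hadj : ∀ k, k + 1 < v → (adjGraph D).Adj (x k) (x (k + 1)))
    (hx : ∀ k, k + 2 < v → x k ≠ x (k + 2)) (hbase : LeftWins D F (x 0) (x 1))
    {k c : ℕ} (hkc : k ≤ c) (hc : c < v) : LeftWins D F (x k) (x c) := by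
  have hsucc : ∀ n, n + 1 < v → LeftWins D F (x n) (x (n + 1)) := by
    intro n hn
    induction n with
    | zero => exact hbase
    | succ n ih =>
      exact hF.leftWins_next (hadj n (by omega)) (hadj (n + 1) hn) (hx n hn) (ih (by omega))
  induction hkc using Nat.decreasingInduction with
  | self => exact hF.leftWins_self (x c)
  | of_succ k hk ih => exact hF.leftWins_trans (hadj k (by omega)) (hsucc k (by omega)) ih

lemma leftWins_of_isPathIn (hF : IsSPRule2 D F) {v : ℕ} (hv : 2 ≤ v) {x : Fin v → A}
    (hx : IsPathIn (adjGraph D) x)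
    (hbase : LeftWins D F (x ⟨0, Nat.zero_lt_of_lt hv⟩) (x ⟨1, hv⟩))
    {k k' : Fin v} (hkk' : k ≤ k') : LeftWins D F (x k) (x k') := by
  set y : ℕ → A := fun n => x ⟨min n (v - 1), by omega⟩
  have hy : ∀ n (hn : n < v), y n = x ⟨n, hn⟩ := fun n hn =>
    congrArg x (Fin.ext (min_eq_left (by omega)))
  have hadj : ∀ n, n + 1 < v → (adjGraph D).Adj (y n) (y (n + 1)) := fun n hn => by
    rw [hy n (by omega), hy (n + 1) hn]
    exact hx.2 n hn
  have hne : ∀ n, n + 2 < v → y n ≠ y (n + 2) := fun n hn => by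
    rw [hy n (by omega), hy (n + 2) hn]
    exact fun e => by simpa using congrArg Fin.val (hx.1 e)
  have key := hF.leftWins_of_le hadj hne (by rwa [hy 0 (by omega), hy 1 (by omega)])
    (Fin.le_def.1 hkk') k'.isLt
  rwa [hy k k.isLt, hy k' k'.isLt] at key

end IsSPRule2

lemma IsPathIn.comp_rev {G : SimpleGraph A} {v : ℕ} {x : Fin v → A} (hx : IsPathIn G x) :
    IsPathIn G (x ∘ Fin.rev) := by
  refine ⟨hx.1.comp Fin.rev_injective, fun k hk => ?_⟩
  have e₁ : Fin.rev ⟨k, by omega⟩ = (⟨v - 2 - k + 1, by omega⟩ : Fin v) := by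
    ext; simp only [Fin.val_rev]; omega
  have e₂ : Fin.rev ⟨k + 1, hk⟩ = (⟨v - 2 - k, by omega⟩ : Fin v) := by
    ext; simp only [Fin.val_rev]; omega
  simpa only [Function.comp_apply, e₁, e₂] using (hx.2 (v - 2 - k) (by omega)).symm

lemma IsSPRule2.leftWins_of_isPathIn_rev {D : Set (Pref A)} {F : Pref A → Pref A → A}
    (hF : IsSPRule2 D F) {v : ℕ} (hv : 2 ≤ v) {x : Fin v → A} (hx : IsPathIn (adjGraph D) x)
    (hbase : LeftWins D F (x ⟨v - 1, Nat.sub_lt (Nat.zero_lt_of_lt hv) Nat.one_pos⟩)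
      (x ⟨v - 2, Nat.sub_lt (Nat.zero_lt_of_lt hv) Nat.two_pos⟩))
    {k k' : Fin v} (hk'k : k' ≤ k) : LeftWins D F (x k) (x k') := by
  simpa only [Function.comp_apply, Fin.rev_rev] using
    hF.leftWins_of_isPathIn hv hx.comp_rev hbase (Fin.rev_le_rev.2 hk'k)

/-- Lemma 1: propagation of the identity of the winner along a
path of the adjacency graph for a two-voter strategy-proof rule. -/
theorem stmt13_step1 (D : Set (Pref A))
    (f : (Fin 2 → Pref A) → A) (hrule : IsRule D f) (hsp : StrategyProof D f)
    (v : ℕ) (hv : 2 ≤ v) (x : Fin v → A) (hpath : IsPathIn (adjGraph D) x) :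
    ((∀ P1 ∈ D, ∀ P2 ∈ D, peak P1 = x ⟨0, by omega⟩ → peak P2 = x ⟨1, by omega⟩ →
        f ![P1, P2] = x ⟨0, by omega⟩) →
      ∀ k k' : Fin v, k ≤ k' → ∀ P1 ∈ D, ∀ P2 ∈ D,
        peak P1 = x k → peak P2 = x k' → f ![P1, P2] = x k) ∧
    ((∀ P1 ∈ D, ∀ P2 ∈ D, peak P1 = x ⟨1, by omega⟩ → peak P2 = x ⟨0, by omega⟩ →
        f ![P1, P2] = x ⟨0, by omega⟩) →
      ∀ k k' : Fin v, k ≤ k' → ∀ P1 ∈ D, ∀ P2 ∈ D,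
        peak P1 = x k' → peak P2 = x k → f ![P1, P2] = x k) ∧
    ((∀ P1 ∈ D, ∀ P2 ∈ D, peak P1 = x ⟨v - 1, by omega⟩ → peak P2 = x ⟨v - 2, by omega⟩ →
        f ![P1, P2] = x ⟨v - 1, by omega⟩) →
      ∀ k k' : Fin v, k' ≤ k → ∀ P1 ∈ D, ∀ P2 ∈ D,
        peak P1 = x k → peak P2 = x k' → f ![P1, P2] = x k) ∧
    ((∀ P1 ∈ D, ∀ P2 ∈ D, peak P1 = x ⟨v - 2, by omega⟩ → peak P2 = x ⟨v - 1, by omega⟩ →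
        f ![P1, P2] = x ⟨v - 1, by omega⟩) →
      ∀ k k' : Fin v, k' ≤ k → ∀ P1 ∈ D, ∀ P2 ∈ D,
        peak P1 = x k' → peak P2 = x k → f ![P1, P2] = x k) := by
  have hF := isSPRule2_of_isRule hrule hsp
  refine ⟨fun h k k' hkk' => hF.leftWins_of_isPathIn hv hpath h hkk',
    fun h k k' hkk' => leftWins_flip_iff.1 <|
      hF.flip.leftWins_of_isPathIn hv hpath (leftWins_flip_iff.2 h) hkk',
    fun h k k' hk'k => hF.leftWins_of_isPathIn_rev hv hpath h hk'k,
    fun h k k' hk'k => leftWins_flip_iff.1 <|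
      hF.flip.leftWins_of_isPathIn_rev hv hpath (leftWins_flip_iff.2 h) hk'k⟩
end
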